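/- arXiv:2503.16966 — 8 statements merged into one kernel-verified Lean document; each statement's English description precedes it below -/
import Mathlib

section
/- Let s, l be positive integers. For every matrix X ∈ M_{s×l}(ℤ) all of whose rows sum to 0 (i.e. X·𝟙 = 0 for the all-ones vector 𝟙 ∈ ℤ^l), there exist Q ∈ GL_s(ℤ) and P ∈ GL_l(ℤ) such that P·𝟙 = 𝟙, the first row of P is (1,0,…,0), and the matrix Q·X·P⁻¹ is in homogeneous Smith normal form. -/
open Matrix

/-- A matrix `A ∈ M_{s×l}(ℤ)` is in Smith normal form: it is diagonal, and there is `r`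
such that the first `r` diagonal entries are positive, the remaining ones vanish, and
consecutive diagonal entries divide each other. -/
def IsSNF {s l : ℕ} (A : Matrix (Fin s) (Fin l) ℤ) : Prop :=
  (∀ (i : Fin s) (j : Fin l), (i : ℕ) ≠ (j : ℕ) → A i j = 0) ∧
  ∃ r : ℕ,
    (∀ (i : Fin s) (j : Fin l), (i : ℕ) = (j : ℕ) →
      ((i : ℕ) < r → 0 < A i j) ∧ (r ≤ (i : ℕ) → A i j = 0)) ∧
    (∀ (i i' : Fin s) (j j' : Fin l), (i : ℕ) = (j : ℕ) → (i' : ℕ) = (j' : ℕ) →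
      (i : ℕ) + 1 = (i' : ℕ) → A i j ∣ A i' j')

/-- The matrix obtained from `A` by erasing its first column. -/
def eraseFirstCol {s l : ℕ} (A : Matrix (Fin s) (Fin l) ℤ) :
    Matrix (Fin s) (Fin (l - 1)) ℤ :=
  Matrix.of fun i j => A i ⟨(j : ℕ) + 1, by have := j.isLt; omega⟩

/-- A matrix `A` with `A·𝟙 = 0` is in homogeneous Smith normal form if the matrix obtained
from `A` by erasing its first column is in Smith normal form. -/
def IsHSNF {s l : ℕ} (A : Matrix (Fin s) (Fin l) ℤ) : Prop :=
  A *ᵥ 1 = 0 ∧ IsSNF (eraseFirstCol A)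

/-!
Smith normal form over `ℤ` by the minimal-entry argument: let `d` be the least nonzero absolute
value of an entry of a matrix `GL`-equivalent to `A`, moved to the corner by permuting and
negating. Division with remainder shows that `d` divides its row and its column, clearing them
gives the block matrix `d ⊕ C`, and adding a row of `C` to the first row shows that `d` divides
every entry of `C`, so induction on the size finishes.

For the homogeneous form, bring `eraseFirstCol X` to Smith normal form `Q (eraseFirstCol X) P`.
Right multiplication by `extendFixingOne P` acts as `P` on the last `l - 1` columns, and this
matrix fixes `𝟙` and has first row `(1, 0, …, 0)`, so `Q X (extendFixingOne P)` still kills `𝟙`.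
-/

namespace Matrix

section Equivalence

variable {R : Type*} [CommRing R] {m n : Type*} [Fintype m] [DecidableEq m] [Fintype n]
  [DecidableEq n]

def GLEquiv (A B : Matrix m n R) : Prop :=
  ∃ (Q : GL m R) (P : GL n R), B = (Q : Matrix m m R) * A * (P : Matrix n n R)

def rankOneTransvection (u v : m → R) (h : v ⬝ᵥ u = 0) : GL m R where
  val := 1 + vecMulVec u v
  inv := 1 - vecMulVec u v
  val_inv := by simp [mul_sub, add_mul, vecMulVec_mul_vecMulVec, h]
  inv_val := by simp [sub_mul, mul_add, vecMulVec_mul_vecMulVec, h]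

namespace GLEquiv

theorem refl (A : Matrix m n R) : GLEquiv A A :=
  ⟨1, 1, by simp⟩

theorem trans {A B C : Matrix m n R} (hAB : GLEquiv A B) (hBC : GLEquiv B C) : GLEquiv A C := by
  obtain ⟨Q, P, rfl⟩ := hAB
  obtain ⟨Q', P', rfl⟩ := hBC
  exact ⟨Q' * Q, P * P', by simp [Matrix.mul_assoc]⟩

theorem neg (A : Matrix m n R) : GLEquiv A (-A) :=
  ⟨-1, 1, by simp⟩

theorem submatrix (A : Matrix m n R) (σ : Equiv.Perm m) (τ : Equiv.Perm n) :
    GLEquiv A (A.submatrix σ τ) := by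
  refine ⟨permMatrixHom.toHomUnits σ⁻¹, permMatrixHom.toHomUnits τ, ?_⟩
  rw [MonoidHom.coe_toHomUnits, MonoidHom.coe_toHomUnits, permMatrixHom_apply,
    permMatrixHom_apply, inv_inv, PEquiv.toMatrix_toPEquiv_mul, PEquiv.mul_toMatrix_toPEquiv]
  rfl

theorem add_vecMulVec_col (A : Matrix m n R) (j₀ : n) (c : n → R) (hc : c j₀ = 0) :
    GLEquiv A (A + vecMulVec (A.col j₀) c) := by
  refine ⟨1, rankOneTransvection (Pi.single j₀ 1) c (by simp [hc]), ?_⟩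
  change _ = 1 * A * (1 + vecMulVec _ c)
  rw [Matrix.one_mul, Matrix.mul_add, Matrix.mul_one, mul_vecMulVec, mulVec_single_one]

theorem add_vecMulVec_row (A : Matrix m n R) (i₀ : m) (c : m → R) (hc : c i₀ = 0) :
    GLEquiv A (A + vecMulVec c (A.row i₀)) := by
  refine ⟨rankOneTransvection c (Pi.single i₀ 1) (by simp [hc]), 1, ?_⟩
  change _ = (1 + vecMulVec c _) * A * 1
  rw [Matrix.mul_one, Matrix.add_mul, Matrix.one_mul, vecMulVec_mul, single_one_vecMul]

theorem dvd {A B : Matrix m n R} (h : GLEquiv A B) {d : R} (hA : ∀ i j, d ∣ A i j)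
    (i : m) (j : n) : d ∣ B i j := by
  obtain ⟨Q, P, rfl⟩ := h
  simp only [mul_apply]
  exact Finset.dvd_sum fun k _ => (Finset.dvd_sum fun k' _ => (hA k' k).mul_left _).mul_right _

end GLEquiv

end Equivalence

section CornerBlock

variable {R : Type*} [CommRing R] {s k l : ℕ}

def cornerBlock (d : R) (C : Matrix (Fin s) (Fin l) R) : Matrix (Fin (s + 1)) (Fin (l + 1)) R :=
  of (Fin.cons (Fin.cons d 0) fun i => Fin.cons 0 (C i))

section

variable (d : R) (C : Matrix (Fin s) (Fin l) R) (i : Fin s) (j : Fin l)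

@[simp] theorem cornerBlock_zero_zero : cornerBlock d C 0 0 = d := rfl
@[simp] theorem cornerBlock_zero_succ : cornerBlock d C 0 j.succ = 0 := rfl
@[simp] theorem cornerBlock_succ_zero : cornerBlock d C i.succ 0 = 0 := rfl
@[simp] theorem cornerBlock_succ_succ : cornerBlock d C i.succ j.succ = C i j := rfl

end

theorem cornerBlock_mul (a b : R) (A : Matrix (Fin s) (Fin k) R) (B : Matrix (Fin k) (Fin l) R) :
    cornerBlock a A * cornerBlock b B = cornerBlock (a * b) (A * B) := by
  ext i j
  cases i using Fin.cases <;> cases j using Fin.cases <;> simp [mul_apply, Fin.sum_univ_succ]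

theorem cornerBlock_one_one : cornerBlock (1 : R) (1 : Matrix (Fin s) (Fin s) R) = 1 := by
  ext i j
  cases i using Fin.cases <;> cases j using Fin.cases <;>
    simp [one_apply, Fin.succ_ne_zero, (Fin.succ_ne_zero _).symm]

def cornerBlockOneHom : Matrix (Fin s) (Fin s) R →* Matrix (Fin (s + 1)) (Fin (s + 1)) R where
  toFun := cornerBlock 1
  map_one' := cornerBlock_one_one
  map_mul' A B := by rw [cornerBlock_mul, one_mul]

theorem GLEquiv.cornerBlock {A B : Matrix (Fin s) (Fin l) R} (h : GLEquiv A B) (d : R) :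
    GLEquiv (cornerBlock d A) (cornerBlock d B) := by
  obtain ⟨Q, P, rfl⟩ := h
  refine ⟨Units.map cornerBlockOneHom Q, Units.map cornerBlockOneHom P, ?_⟩
  simp [cornerBlockOneHom, cornerBlock_mul]

theorem exists_glEquiv_cornerBlock (A : Matrix (Fin (s + 1)) (Fin (l + 1)) R)
    (hrow : ∀ j, A 0 0 ∣ A 0 j) (hcol : ∀ i, A 0 0 ∣ A i 0) :
    ∃ C, GLEquiv A (cornerBlock (A 0 0) C) := by
  choose x hx using hrow
  choose y hy using hcol
  set B := A + vecMulVec (A.col 0) (Fin.cons 0 fun j => -x j.succ)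
  have hAB : GLEquiv A B := GLEquiv.add_vecMulVec_col A 0 _ rfl
  set D := B + vecMulVec (Fin.cons 0 fun i => -y i.succ) (B.row 0)
  have hBD : GLEquiv B D := GLEquiv.add_vecMulVec_row B 0 _ rfl
  have hD : D = cornerBlock (A 0 0) (D.submatrix Fin.succ Fin.succ) := by
    ext i j
    cases i using Fin.cases with
    | zero =>
      cases j using Fin.cases with
      | zero => simp [D, B, vecMulVec_apply]
      | succ j => simp [D, B, vecMulVec_apply, hx j.succ]
    | succ i =>
      cases j using Fin.cases with
      | zero => simp [D, B, vecMulVec_apply, hy i.succ, mul_comm]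
      | succ j => simp [D, B, vecMulVec_apply]
  exact ⟨_, hD ▸ hAB.trans hBD⟩

end CornerBlock

section ExtendFixingOne

variable {R : Type*} [CommRing R] {m : ℕ}

def extendFixingOne (M : Matrix (Fin m) (Fin m) R) : Matrix (Fin (m + 1)) (Fin (m + 1)) R :=
  of (Fin.cons (Fin.cons 1 0) fun i => Fin.cons (1 - ∑ k, M i k) (M i))

section

variable (M : Matrix (Fin m) (Fin m) R) (i j : Fin m)

@[simp] theorem extendFixingOne_zero_zero : extendFixingOne M 0 0 = 1 := rfl
@[simp] theorem extendFixingOne_zero_succ : extendFixingOne M 0 j.succ = 0 := rfl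
@[simp] theorem extendFixingOne_succ_zero : extendFixingOne M i.succ 0 = 1 - ∑ k, M i k := rfl
@[simp] theorem extendFixingOne_succ_succ : extendFixingOne M i.succ j.succ = M i j := rfl

end

theorem extendFixingOne_mulVec_one (M : Matrix (Fin m) (Fin m) R) :
    extendFixingOne M *ᵥ 1 = 1 := by
  ext i
  cases i using Fin.cases <;> simp [mulVec, dotProduct, Fin.sum_univ_succ]

theorem extendFixingOne_mul (M N : Matrix (Fin m) (Fin m) R) :
    extendFixingOne (M * N) = extendFixingOne M * extendFixingOne N := by
  ext i j
  cases i using Fin.cases <;> cases j using Fin.cases <;>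
    simp [mul_apply, Fin.sum_univ_succ, mul_sub, Finset.mul_sum, Finset.sum_sub_distrib]
  exact Finset.sum_comm

theorem extendFixingOne_one : extendFixingOne (1 : Matrix (Fin m) (Fin m) R) = 1 := by
  ext i j
  cases i using Fin.cases <;> cases j using Fin.cases <;>
    simp [one_apply, Fin.succ_ne_zero, (Fin.succ_ne_zero _).symm]

def extendFixingOneHom : Matrix (Fin m) (Fin m) R →* Matrix (Fin (m + 1)) (Fin (m + 1)) R where
  toFun := extendFixingOne
  map_one' := extendFixingOne_one
  map_mul' := extendFixingOne_mul

theorem submatrix_succ_mul_extendFixingOne {s : ℕ} (Y : Matrix (Fin s) (Fin (m + 1)) R)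
    (M : Matrix (Fin m) (Fin m) R) :
    (Y * extendFixingOne M).submatrix id Fin.succ = Y.submatrix id Fin.succ * M := by
  ext i j
  simp [mul_apply, Fin.sum_univ_succ]

end ExtendFixingOne

section EntryBound

variable {m n : Type*} [Fintype m] [DecidableEq m] [Fintype n] [DecidableEq n]

def GLClassEntryBound (A : Matrix m n ℤ) (d : ℕ) : Prop :=
  ∀ B, GLEquiv A B → ∀ i j, B i j ≠ 0 → d ≤ (B i j).natAbs

variable {A B : Matrix m n ℤ} {d : ℕ}

theorem GLClassEntryBound.of_glEquiv (hA : GLClassEntryBound A d) (h : GLEquiv A B) :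
    GLClassEntryBound B d :=
  fun C hC => hA C (h.trans hC)

theorem GLClassEntryBound.dvd_of_row (hA : GLClassEntryBound A d) (hd : 0 < d) {i : m} {j₀ : n}
    (hij₀ : A i j₀ = d) (j : n) : (d : ℤ) ∣ A i j := by
  by_cases hj : j = j₀
  · rw [hj, hij₀]
  set B := A + vecMulVec (A.col j₀) (Pi.single j (-(A i j / d)))
  have hB : B i j = A i j % d := by
    simp [B, vecMulVec_apply, hij₀, Int.emod_def, sub_eq_add_neg]
  have hAB : GLEquiv A B := GLEquiv.add_vecMulVec_col A j₀ _ (by simp [Ne.symm hj])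
  apply Int.dvd_of_emod_eq_zero
  by_contra h
  have hle := hA B hAB i j (hB ▸ h)
  rw [hB] at hle
  have := Int.emod_nonneg (A i j) (by omega : (d : ℤ) ≠ 0)
  have := Int.emod_lt_of_pos (A i j) (by omega : (0 : ℤ) < d)
  omega

theorem GLClassEntryBound.dvd_of_col (hA : GLClassEntryBound A d) (hd : 0 < d) {i₀ : m} {j : n}
    (hi₀j : A i₀ j = d) (i : m) : (d : ℤ) ∣ A i j := by
  by_cases hi : i = i₀
  · rw [hi, hi₀j]
  set B := A + vecMulVec (Pi.single i (-(A i j / d))) (A.row i₀)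
  have hB : B i j = A i j % d := by
    simp [B, vecMulVec_apply, hi₀j, Int.emod_def, sub_eq_add_neg, mul_comm]
  have hAB : GLEquiv A B := GLEquiv.add_vecMulVec_row A i₀ _ (by simp [Ne.symm hi])
  apply Int.dvd_of_emod_eq_zero
  by_contra h
  have hle := hA B hAB i j (hB ▸ h)
  rw [hB] at hle
  have := Int.emod_nonneg (A i j) (by omega : (d : ℤ) ≠ 0)
  have := Int.emod_lt_of_pos (A i j) (by omega : (0 : ℤ) < d)
  omega

end EntryBound

section Pivot

variable {s l : ℕ}

theorem GLClassEntryBound.dvd_of_cornerBlock {d : ℕ} {C : Matrix (Fin s) (Fin l) ℤ}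
    (h : GLClassEntryBound (cornerBlock (d : ℤ) C) d) (hd : 0 < d) (i : Fin s) (j : Fin l) :
    (d : ℤ) ∣ C i j := by
  set B := cornerBlock (d : ℤ) C + vecMulVec (Pi.single 0 1) ((cornerBlock (d : ℤ) C).row i.succ)
  have hB : GLClassEntryBound B d :=
    h.of_glEquiv (GLEquiv.add_vecMulVec_row _ i.succ _ (by simp [Fin.succ_ne_zero]))
  have hB₀ : B 0 0 = d := by simp [B, vecMulVec_apply]
  simpa [B, vecMulVec_apply] using hB.dvd_of_row hd hB₀ j.succ

theorem exists_glEquiv_cornerBlock_dvd (A : Matrix (Fin (s + 1)) (Fin (l + 1)) ℤ) (hA : A ≠ 0) :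
    ∃ d : ℤ, 0 < d ∧ ∃ C, GLEquiv A (cornerBlock d C) ∧ ∀ i j, d ∣ C i j := by
  classical
  have hex : ∃ n, 0 < n ∧ ∃ B, GLEquiv A B ∧ ∃ i j, (B i j).natAbs = n := by
    obtain ⟨i, j, hij⟩ : ∃ i j, A i j ≠ 0 := by
      by_contra! h
      exact hA (Matrix.ext h)
    exact ⟨_, Int.natAbs_pos.2 hij, A, .refl A, i, j, rfl⟩
  obtain ⟨hd, B, hAB, i₀, j₀, hB⟩ := Nat.find_spec hex
  set d := Nat.find hex
  have hmin : GLClassEntryBound A d := fun C hC i j hij =>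
    Nat.find_min' hex ⟨Int.natAbs_pos.2 hij, C, hC, i, j, rfl⟩
  obtain ⟨B', hAB', hB'⟩ : ∃ B', GLEquiv A B' ∧ B' 0 0 = d := by
    have hAB' := hAB.trans (GLEquiv.submatrix B (Equiv.swap 0 i₀) (Equiv.swap 0 j₀))
    have hB₀ : B.submatrix (Equiv.swap 0 i₀) (Equiv.swap 0 j₀) 0 0 = B i₀ j₀ := by simp
    rcases Int.natAbs_eq (B i₀ j₀) with h | h
    · exact ⟨_, hAB', by omega⟩
    · exact ⟨_, hAB'.trans (.neg _), by rw [neg_apply]; omega⟩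
  have hmin' := hmin.of_glEquiv hAB'
  obtain ⟨C, hB'C⟩ := exists_glEquiv_cornerBlock B' (fun j => hB' ▸ hmin'.dvd_of_row hd hB' j)
    (fun i => hB' ▸ hmin'.dvd_of_col hd hB' i)
  rw [hB'] at hB'C
  have hAC := hAB'.trans hB'C
  exact ⟨d, by omega, C, hAC, (hmin.of_glEquiv hAC).dvd_of_cornerBlock hd⟩

end Pivot

end Matrix

section SNF

open Matrix

variable {s l : ℕ}

theorem isSNF_zero : IsSNF (0 : Matrix (Fin s) (Fin l) ℤ) :=
  ⟨fun _ _ _ => rfl, 0, fun _ _ _ => ⟨fun h => absurd h (Nat.not_lt_zero _), fun _ => rfl⟩,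
    fun _ _ _ _ _ _ _ => dvd_rfl⟩

theorem IsSNF.cornerBlock {d : ℤ} {C : Matrix (Fin s) (Fin l) ℤ} (hC : IsSNF C) (hd : 0 < d)
    (hdC : ∀ i j, d ∣ C i j) : IsSNF (cornerBlock d C) := by
  obtain ⟨hdiag, r, hr, hchain⟩ := hC
  refine ⟨fun i j hij => ?_, r + 1, fun i j hij => ?_, fun i i' j j' hij hij' hii' => ?_⟩
  · cases i using Fin.cases <;> cases j using Fin.cases <;> simp_all [Fin.val_succ]
  · cases i using Fin.cases <;> cases j using Fin.cases <;> simp_all [Fin.val_succ]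
  · cases i using Fin.cases <;> cases j using Fin.cases <;> cases i' using Fin.cases <;>
      cases j' using Fin.cases <;> simp_all [Fin.val_succ]

theorem exists_glEquiv_isSNF (A : Matrix (Fin s) (Fin l) ℤ) : ∃ B, GLEquiv A B ∧ IsSNF B := by
  induction s generalizing l with
  | zero => exact ⟨A, .refl A, Subsingleton.elim 0 A ▸ isSNF_zero⟩
  | succ s ih =>
    cases l with
    | zero => exact ⟨A, .refl A, Subsingleton.elim 0 A ▸ isSNF_zero⟩
    | succ l =>
      by_cases hA : A = 0
      · exact ⟨A, .refl A, hA ▸ isSNF_zero⟩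
      obtain ⟨d, hd, C, hAC, hdC⟩ := exists_glEquiv_cornerBlock_dvd A hA
      obtain ⟨C', hCC', hC'⟩ := ih C
      exact ⟨cornerBlock d C', hAC.trans (hCC'.cornerBlock d), hC'.cornerBlock hd (hCC'.dvd hdC)⟩

theorem eraseFirstCol_eq_submatrix (Y : Matrix (Fin s) (Fin (l + 1)) ℤ) :
    eraseFirstCol Y = Y.submatrix id Fin.succ :=
  rfl

end SNF

theorem hsnf_exists_general (s l : ℕ) (hl : 0 < l)
    (X : Matrix (Fin s) (Fin l) ℤ) (hX : X *ᵥ 1 = 0) :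
    ∃ (Q : Matrix.GeneralLinearGroup (Fin s) ℤ) (P : Matrix.GeneralLinearGroup (Fin l) ℤ),
      (P : Matrix (Fin l) (Fin l) ℤ) *ᵥ 1 = 1 ∧
      (∀ j : Fin l, (P : Matrix (Fin l) (Fin l) ℤ) ⟨0, hl⟩ j =
        if (j : ℕ) = 0 then 1 else 0) ∧
      IsHSNF ((Q : Matrix (Fin s) (Fin s) ℤ) * X *
        ((P⁻¹ : Matrix.GeneralLinearGroup (Fin l) ℤ) : Matrix (Fin l) (Fin l) ℤ)) := by
  obtain ⟨l, rfl⟩ : ∃ l', l = l' + 1 := ⟨l - 1, by omega⟩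
  obtain ⟨_, ⟨Q, P, rfl⟩, hSNF⟩ := exists_glEquiv_isSNF (eraseFirstCol X)
  refine ⟨Q, Units.map extendFixingOneHom P⁻¹, ?_, fun j => ?_, ?_, ?_⟩ <;>
    simp only [map_inv, inv_inv, Units.coe_map, extendFixingOneHom, MonoidHom.coe_mk,
      OneHom.coe_mk]
  · exact extendFixingOne_mulVec_one _
  · cases j using Fin.cases <;> simp
  · rw [← mulVec_mulVec, extendFixingOne_mulVec_one, ← mulVec_mulVec, hX, mulVec_zero]
  · rw [eraseFirstCol_eq_submatrix, submatrix_succ_mul_extendFixingOne]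
    exact hSNF

/-- Every integer matrix all of whose rows sum to zero can be brought to homogeneous Smith
normal form by `Q ∈ GL_s(ℤ)` and `P ∈ GL_l(ℤ)` with `P·𝟙 = 𝟙` and first row of `P` equal
to `(1,0,…,0)`. -/
theorem hsnf_exists (s l : ℕ) (hs : 0 < s) (hl : 0 < l)
    (X : Matrix (Fin s) (Fin l) ℤ) (hX : X *ᵥ 1 = 0) :
    ∃ (Q : Matrix.GeneralLinearGroup (Fin s) ℤ) (P : Matrix.GeneralLinearGroup (Fin l) ℤ),
      (P : Matrix (Fin l) (Fin l) ℤ) *ᵥ 1 = 1 ∧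
      (∀ j : Fin l, (P : Matrix (Fin l) (Fin l) ℤ) ⟨0, hl⟩ j =
        if (j : ℕ) = 0 then 1 else 0) ∧
      IsHSNF ((Q : Matrix (Fin s) (Fin s) ℤ) * X *
        ((P⁻¹ : Matrix.GeneralLinearGroup (Fin l) ℤ) : Matrix (Fin l) (Fin l) ℤ)) :=
  hsnf_exists_general s l hl X hX
end

section
/- Let s, l be positive integers, X ∈ M_{s×l}(ℤ) a matrix all of whose rows sum to 0, Q ∈ GL_s(ℤ), and P ∈ GL_l(ℤ) with P·𝟙 = 𝟙. Then there exist Q' ∈ GL_s(ℤ) and P' ∈ GL_l(ℤ) with P'·𝟙 = 𝟙 and first row of P' equal to (1,0,…,0), such that Q·X·P⁻¹ = Q'·X·(P')⁻¹. (The orbits of the GL_s(ℤ)×GL_l^h(ℤ) action on homogeneous matrices coincide with the orbits of the subgroup GL_s(ℤ)×G, where G ≤ GL_l^h(ℤ) consists of the matrices leaving {0}×ℤ^{l−1} ⊂ ℤ^l invariant.) -/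
open Matrix

private lemma aux_mul_vvv {m n : Type*} [Fintype n] (M : Matrix m n ℤ) (u : n → ℤ)
    (v : n → ℤ) : M * vecMulVec u v = vecMulVec (M *ᵥ u) v := by
  ext i j
  simp [mul_apply, vecMulVec_apply, mulVec, dotProduct, Finset.sum_mul, mul_assoc]

private lemma aux_vvv_mul {m n : Type*} [Fintype n] (M : Matrix n m ℤ) (u : n → ℤ)
    (v : n → ℤ) : vecMulVec u v * M = vecMulVec u (v ᵥ* M) := by
  ext i j
  simp [mul_apply, vecMulVec_apply, vecMul, dotProduct, Finset.mul_sum, mul_assoc]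

private lemma aux_vvv_mulVec {n : Type*} [Fintype n] (u : n → ℤ) (v w : n → ℤ) :
    vecMulVec u v *ᵥ w = (v ⬝ᵥ w) • u := by
  ext i
  simp only [mulVec, vecMulVec_apply, dotProduct, Pi.smul_apply, smul_eq_mul,
    Finset.sum_mul]
  refine Finset.sum_congr rfl fun x _ => by ring

private lemma aux_vecMul_vvv {n m : Type*} [Fintype n] (w : n → ℤ) (u : n → ℤ)
    (v : m → ℤ) : w ᵥ* vecMulVec u v = (w ⬝ᵥ u) • v := by
  ext j
  simp only [vecMul, vecMulVec_apply, dotProduct, Pi.smul_apply, smul_eq_mul,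
    Finset.sum_mul]
  refine Finset.sum_congr rfl fun x _ => by ring

private lemma aux_zero_vvv {m n : Type*} (v : n → ℤ) :
    vecMulVec (0 : m → ℤ) v = 0 := by
  ext i j; simp [vecMulVec_apply]

private lemma aux_vvv_zero {m n : Type*} (u : m → ℤ) :
    vecMulVec u (0 : n → ℤ) = 0 := by
  ext i j; simp [vecMulVec_apply]

/-- Any element of the orbit of a homogeneous matrix `X` under the action of
`GL_s(ℤ) × GL_l^h(ℤ)` is already obtained using a matrix `P'` whose first row is
`(1,0,…,0)`, i.e. one leaving `{0} × ℤ^{l-1} ⊂ ℤ^l` invariant. -/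
theorem orbits_coincide (s l : ℕ) (hs : 0 < s) (hl : 0 < l)
    (X : Matrix (Fin s) (Fin l) ℤ) (hX : X *ᵥ 1 = 0)
    (Q : Matrix.GeneralLinearGroup (Fin s) ℤ) (P : Matrix.GeneralLinearGroup (Fin l) ℤ)
    (hP : (P : Matrix (Fin l) (Fin l) ℤ) *ᵥ 1 = 1) :
    ∃ (Q' : Matrix.GeneralLinearGroup (Fin s) ℤ)
      (P' : Matrix.GeneralLinearGroup (Fin l) ℤ),
      (P' : Matrix (Fin l) (Fin l) ℤ) *ᵥ 1 = 1 ∧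
      (∀ j : Fin l, (P' : Matrix (Fin l) (Fin l) ℤ) ⟨0, hl⟩ j =
        if (j : ℕ) = 0 then 1 else 0) ∧
      (Q : Matrix (Fin s) (Fin s) ℤ) * X *
          ((P⁻¹ : Matrix.GeneralLinearGroup (Fin l) ℤ) : Matrix (Fin l) (Fin l) ℤ) =
        (Q' : Matrix (Fin s) (Fin s) ℤ) * X *
          ((P'⁻¹ : Matrix.GeneralLinearGroup (Fin l) ℤ) : Matrix (Fin l) (Fin l) ℤ) := by
  classical
  set i0 : Fin l := ⟨0, hl⟩ with hi0
  set Pm : Matrix (Fin l) (Fin l) ℤ := ↑P with hPm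
  set A : Matrix (Fin l) (Fin l) ℤ := ↑(P⁻¹) with hA
  have hPA : Pm * A = 1 := P.mul_inv
  have hAP : A * Pm = 1 := P.inv_mul
  -- the all-ones vector
  set u : Fin l → ℤ := 1 with hu
  have hA1 : A *ᵥ u = u := by
    calc A *ᵥ u = A *ᵥ (Pm *ᵥ u) := by rw [hP]
    _ = (A * Pm) *ᵥ u := by rw [mulVec_mulVec]
    _ = u := by rw [hAP, one_mulVec]
  -- the correction vector
  set v : Fin l → ℤ := fun j => (if (j : ℕ) = 0 then 1 else 0) - Pm i0 j with hv
  have h1 : ∑ j, Pm i0 j = 1 := by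
    have := congrFun hP i0
    simpa [mulVec, dotProduct, hu] using this
  have h2 : (∑ j : Fin l, if (j : ℕ) = 0 then (1 : ℤ) else 0) = 1 := by
    have hiff : ∀ j : Fin l, ((j : ℕ) = 0 ↔ j = i0) := fun j => by
      simp [hi0, Fin.ext_iff]
    simp only [hiff]
    rw [Finset.sum_ite_eq' Finset.univ i0 (fun _ => (1 : ℤ))]
    simp
  have hvu : v ⬝ᵥ u = 0 := by
    simp only [dotProduct, hv, hu, Pi.one_apply, mul_one, Finset.sum_sub_distrib, h1, h2]
    ring
  have hcu : (v ᵥ* A) ⬝ᵥ u = 0 := by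
    rw [← dotProduct_mulVec, hA1, hvu]
  have hcP : (v ᵥ* A) ᵥ* Pm = v := by
    rw [vecMul_vecMul, hAP, vecMul_one]
  -- the new matrices
  set M : Matrix (Fin l) (Fin l) ℤ := Pm + vecMulVec u v with hM
  set N : Matrix (Fin l) (Fin l) ℤ := A - vecMulVec u (v ᵥ* A) with hN
  have hMN : M * N = 1 := by
    rw [hM, hN, Matrix.add_mul, Matrix.mul_sub, Matrix.mul_sub, hPA,
      aux_mul_vvv, aux_vvv_mul, aux_mul_vvv, hP, aux_vvv_mulVec, hvu, zero_smul,
      aux_zero_vvv]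
    abel
  have hNM : N * M = 1 := by
    rw [hN, hM, Matrix.sub_mul, Matrix.mul_add, Matrix.mul_add, hAP,
      aux_mul_vvv, aux_vvv_mul, aux_vvv_mul, aux_vecMul_vvv, hA1, hcP, hcu, zero_smul,
      aux_vvv_zero]
    abel
  refine ⟨Q, ⟨M, N, hMN, hNM⟩, ?_, ?_, ?_⟩
  · show M *ᵥ u = u
    rw [hM, add_mulVec, hP, aux_vvv_mulVec, hvu, zero_smul, add_zero]
  · intro j
    show M i0 j = _
    simp [hM, hv, vecMulVec_apply, hu, Pi.one_apply]
  · show _ * X * A = _ * X * N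
    have hXN : X * A = X * N := by
      rw [hN, Matrix.mul_sub, aux_mul_vvv, hX, aux_zero_vvv, sub_zero]
    rw [Matrix.mul_assoc, Matrix.mul_assoc, hXN]
end

section
/- Let s, l be positive integers and X ∈ M_{s×l}(ℤ) a matrix all of whose rows sum to 0. Suppose D = Q₁·X·P₁⁻¹ is in Smith normal form for some Q₁ ∈ GL_s(ℤ), P₁ ∈ GL_l(ℤ), and A = Q₂·X·P₂⁻¹ is in homogeneous Smith normal form for some Q₂ ∈ GL_s(ℤ) and P₂ ∈ GL_l(ℤ) with P₂·𝟙 = 𝟙. Then A_{i,i+1} = D_{i,i} for every 1 ≤ i ≤ min(s, l−1). In other words, the diagonal directly above the main diagonal of the homogeneous Smith normal form of X is (α_1,…,α_r,0,…,0), where α_1,…,α_r are the invariant factors of X. -/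
open Matrix

/-!
`D` and the matrix `shiftLeft A` (drop the first column of `A`, append a zero column) are
both diagonal with diagonals forming divisibility chains, and for such a matrix the `k`-th
determinantal divisor (gcd of `k × k` minors) is the product of the first `k` diagonal
entries. Determinantal divisors are invariant under multiplication by invertible matrices,
so `D` and `A` both have those of `X`. Since `A 𝟙 = 0`, the dropped column is minus the sum of
the others, so `A` and `shiftLeft A` are right multiples of each other and also share their
determinantal divisors. Equal prefix products of two divisibility chains force equal terms.
-/

open Finset

theorem prod_range_card_dvd_prod {M : Type*} [CommMonoid M] {δ : ℕ → M}
    (hδ : ∀ n, δ n ∣ δ (n + 1)) (S : Finset ℕ) : ∏ t ∈ range #S, δ t ∣ ∏ t ∈ S, δ t := by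
  induction S using Finset.induction_on_max with
  | empty => simp
  | insert a S hlt ih =>
    have ha : a ∉ S := fun h => lt_irrefl a (hlt a h)
    have hcard : #S ≤ a := by
      simpa using card_le_card fun x hx => mem_range.2 (hlt x hx)
    rw [card_insert_of_notMem ha, prod_range_succ, prod_insert ha, mul_comm]
    exact mul_dvd_mul (Nat.rel_of_forall_rel_succ_of_le (· ∣ ·) hδ hcard) ih

/-- Once a term of a divisibility chain vanishes, so do all later ones; otherwise the common
prefix product is nonzero and cancels. -/
theorem eq_of_prod_range_eq_of_dvd_succ {M : Type*} [CommMonoidWithZero M] [IsCancelMulZero M]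
    [Nontrivial M] {δ ε : ℕ → M} (hδ : ∀ n, δ n ∣ δ (n + 1)) (hε : ∀ n, ε n ∣ ε (n + 1)) {m : ℕ}
    (h : ∀ k ≤ m, ∏ t ∈ range k, δ t = ∏ t ∈ range k, ε t) : ∀ n < m, δ n = ε n := by
  intro n
  induction n using Nat.strong_induction_on with
  | _ n ih =>
    intro hn
    have hsucc := h (n + 1) hn
    rw [prod_range_succ, prod_range_succ, h n hn.le] at hsucc
    by_cases hP : ∏ t ∈ range n, ε t = 0
    · obtain ⟨t, ht, hεt⟩ := prod_eq_zero_iff.1 hP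
      have htn := (mem_range.1 ht).le
      have hδt : δ t = 0 := (ih t (mem_range.1 ht) (by omega)).trans hεt
      have hδn : δ n = 0 := zero_dvd_iff.1 (hδt ▸ Nat.rel_of_forall_rel_succ_of_le (· ∣ ·) hδ htn)
      have hεn : ε n = 0 := zero_dvd_iff.1 (hεt ▸ Nat.rel_of_forall_rel_succ_of_le (· ∣ ·) hε htn)
      rw [hδn, hεn]
    · exact mul_left_cancel₀ hP hsucc

namespace Matrix

section CauchyBinet

variable {R : Type*} [CommRing R] {n : Type*} [Fintype n]

theorem det_mul_eq_sum_prod_mul_det_submatrix {k : ℕ} (P : Matrix (Fin k) n R)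
    (Q : Matrix n (Fin k) R) :
    (P * Q).det = ∑ h : Fin k → n, (∏ i, P i (h i)) * (Q.submatrix h id).det := by
  let D := (detRowAlternating (R := R) (n := Fin k)).toMultilinearMap
  have hrows : (P * Q).det = D fun i => ∑ t, P i t • Q t := by
    congr 1
    ext i j
    simp [mul_apply, Finset.sum_apply]
  rw [hrows, D.map_sum (fun i t => P i t • Q t)]
  exact sum_congr rfl fun h _ =>
    (D.map_smul_univ (fun i => P i (h i)) (fun i => Q (h i))).trans (smul_eq_mul _ _)

end CauchyBinet

section DetDivisor

variable {R : Type*} [CommRing R] [NormalizedGCDMonoid R]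
  {m n p : Type*} [Fintype m] [Fintype n] [Fintype p]

/-- Minors are indexed by arbitrary maps `Fin k → m`, `Fin k → n`; those with a repeated row
or column vanish and do not change the gcd. -/
def detDivisor (k : ℕ) (M : Matrix m n R) : R :=
  univ.gcd fun fg : (Fin k → m) × (Fin k → n) => (M.submatrix fg.1 fg.2).det

variable {k : ℕ}

theorem detDivisor_dvd_det_submatrix (M : Matrix m n R) (f : Fin k → m) (g : Fin k → n) :
    detDivisor k M ∣ (M.submatrix f g).det :=
  gcd_dvd (mem_univ (f, g))

theorem dvd_detDivisor_iff {M : Matrix m n R} {x : R} :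
    x ∣ detDivisor k M ↔ ∀ (f : Fin k → m) (g : Fin k → n), x ∣ (M.submatrix f g).det := by
  simp [detDivisor, Finset.dvd_gcd_iff]

theorem normalize_detDivisor (M : Matrix m n R) : normalize (detDivisor k M) = detDivisor k M :=
  normalize_gcd

theorem detDivisor_transpose_dvd (M : Matrix m n R) : detDivisor k Mᵀ ∣ detDivisor k M :=
  dvd_detDivisor_iff.2 fun f g => by
    simpa [← det_transpose (M.submatrix f g)] using detDivisor_dvd_det_submatrix Mᵀ g f

theorem detDivisor_transpose [IsDomain R] (M : Matrix m n R) : detDivisor k Mᵀ = detDivisor k M :=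
  dvd_antisymm_of_normalize_eq (normalize_detDivisor _) (normalize_detDivisor _)
    (detDivisor_transpose_dvd M) (by simpa using detDivisor_transpose_dvd Mᵀ)

theorem detDivisor_dvd_mul_left (M : Matrix m n R) (N : Matrix n p R) :
    detDivisor k N ∣ detDivisor k (M * N) := by
  refine dvd_detDivisor_iff.2 fun f g => ?_
  rw [submatrix_mul M N f id g Function.bijective_id, det_mul_eq_sum_prod_mul_det_submatrix]
  exact dvd_sum fun h _ => dvd_mul_of_dvd_right (detDivisor_dvd_det_submatrix N h g) _

theorem detDivisor_dvd_mul_right [IsDomain R] (M : Matrix m n R) (N : Matrix n p R) :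
    detDivisor k M ∣ detDivisor k (M * N) := by
  have h := detDivisor_dvd_mul_left (k := k) Nᵀ Mᵀ
  rwa [← transpose_mul, detDivisor_transpose, detDivisor_transpose] at h

theorem detDivisor_dvd_mul_mul [IsDomain R] (P : Matrix m m R) (M : Matrix m n R)
    (Q : Matrix n n R) :
    detDivisor k M ∣ detDivisor k (P * M * Q) :=
  (detDivisor_dvd_mul_left P M).trans (detDivisor_dvd_mul_right _ Q)

theorem detDivisor_units_mul_mul [IsDomain R] [DecidableEq m] [DecidableEq n] (U : GL m R)
    (M : Matrix m n R) (V : GL n R) :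
    detDivisor k ((U : Matrix m m R) * M * (V : Matrix n n R)) = detDivisor k M := by
  refine dvd_antisymm_of_normalize_eq (normalize_detDivisor _) (normalize_detDivisor _) ?_
    (detDivisor_dvd_mul_mul _ M _)
  simpa [Matrix.mul_assoc] using
    detDivisor_dvd_mul_mul (U⁻¹ : GL m R) ((U : Matrix m m R) * M * (V : Matrix n n R))
      (V⁻¹ : GL n R)

theorem detDivisor_eq_of_eq_mul_of_eq_mul [IsDomain R] {M N : Matrix m n R} {U V : Matrix n n R}
    (hN : N = M * U) (hM : M = N * V) : detDivisor k N = detDivisor k M :=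
  dvd_antisymm_of_normalize_eq (normalize_detDivisor _) (normalize_detDivisor _)
    (hM ▸ detDivisor_dvd_mul_right N V) (hN ▸ detDivisor_dvd_mul_right M U)

end DetDivisor

section DiagonalShape

variable {R : Type*} [CommRing R] {s l k : ℕ}

theorem prod_range_dvd_det_submatrix {M : Matrix (Fin s) (Fin l) R} {δ : ℕ → R}
    (hM : ∀ i j, M i j = if (i : ℕ) = j then δ i else 0) (hδ : ∀ n, δ n ∣ δ (n + 1))
    (f : Fin k → Fin s) (g : Fin k → Fin l) : ∏ t ∈ range k, δ t ∣ (M.submatrix f g).det := by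
  by_cases hg : Function.Injective g
  · obtain ⟨E, hE⟩ : ∃ E : Matrix (Fin k) (Fin k) R,
        M.submatrix f g = of fun i j => δ (g j) * E i j := by
      refine ⟨of fun i j => if (f i : ℕ) = g j then 1 else 0, ?_⟩
      ext i j
      by_cases hij : (f i : ℕ) = g j <;> simp [hM, hij]
    have hval : Function.Injective fun i => (g i : ℕ) := Fin.val_injective.comp hg
    have hprod := prod_range_card_dvd_prod hδ (univ.image fun i => (g i : ℕ))
    rw [card_image_of_injective _ hval, card_univ, Fintype.card_fin,
      prod_image fun a _ b _ hab => hval hab] at hprod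
    rw [hE, det_mul_row]
    exact dvd_mul_of_dvd_left hprod _
  · obtain ⟨a, b, hab, hne⟩ := Function.not_injective_iff.1 hg
    rw [det_zero_of_column_eq hne fun i => by simp [hab]]
    exact dvd_zero _

theorem detDivisor_eq_prod_range {M : Matrix (Fin s) (Fin l) ℤ} {δ : ℕ → ℤ}
    (hM : ∀ i j, M i j = if (i : ℕ) = j then δ i else 0) (hδ : ∀ n, δ n ∣ δ (n + 1))
    (hδ₀ : ∀ n, 0 ≤ δ n) (hks : k ≤ s) (hkl : k ≤ l) :
    detDivisor k M = ∏ t ∈ range k, δ t := by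
  refine dvd_antisymm_of_normalize_eq (normalize_detDivisor M)
    (Int.normalize_of_nonneg (prod_nonneg fun t _ => hδ₀ t)) ?_
    (dvd_detDivisor_iff.2 (prod_range_dvd_det_submatrix hM hδ))
  have hdiag : M.submatrix (Fin.castLE hks) (Fin.castLE hkl) = diagonal fun t : Fin k => δ t := by
    ext i j
    simp [hM, diagonal_apply, Fin.ext_iff]
  simpa [hdiag, Fin.prod_univ_eq_prod_range δ] using
    detDivisor_dvd_det_submatrix M (Fin.castLE hks) (Fin.castLE hkl)

end DiagonalShape

/-- The diagonal of `M`, extended by `0` from index `min s l` on. -/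
def diagSeq {α : Type*} [Zero α] {s l : ℕ} (M : Matrix (Fin s) (Fin l) α) (n : ℕ) : α :=
  if h : n < s ∧ n < l then M ⟨n, h.1⟩ ⟨n, h.2⟩ else 0

def shiftLeft {α : Type*} [Zero α] {m : Type*} {n : ℕ} (A : Matrix m (Fin (n + 1)) α) :
    Matrix m (Fin (n + 1)) α :=
  of fun i => Fin.lastCases 0 fun j => A i j.succ

theorem detDivisor_shiftLeft {R : Type*} [CommRing R] [IsDomain R] [NormalizedGCDMonoid R]
    {m : Type*} [Fintype m] {n k : ℕ} {A : Matrix m (Fin (n + 1)) R} (hA : A *ᵥ 1 = 0) :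
    detDivisor k (shiftLeft A) = detDivisor k A := by
  have hrow : ∀ i, A i 0 = -∑ j : Fin n, A i j.succ := fun i => by
    have h := congrFun hA i
    simp only [mulVec, dotProduct, Pi.one_apply, mul_one, Fin.sum_univ_succ, Pi.zero_apply] at h
    exact eq_neg_of_add_eq_zero_left h
  -- The last column of the first factor is `𝟙`, which `A` kills; column `0` of the second
  -- factor is `-𝟙`, which recovers column `0` of `A` from the zero row sums.
  refine detDivisor_eq_of_eq_mul_of_eq_mul
    (U := of fun t => Fin.lastCases 1 fun j => if t = j.succ then 1 else 0)
    (V := of fun t => Fin.cases (-1) fun j => if t = j.castSucc then 1 else 0) ?_ ?_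
  · ext i j
    induction j using Fin.lastCases with
    | last => simpa [shiftLeft, mul_apply, mulVec, dotProduct] using (congrFun hA i).symm
    | cast j => simp [shiftLeft, mul_apply]
  · ext i j
    induction j using Fin.cases with
    | zero => simp [shiftLeft, mul_apply, Fin.sum_univ_castSucc, hrow]
    | succ j => simp [shiftLeft, mul_apply]

end Matrix

namespace IsSNF

variable {s l : ℕ} {M : Matrix (Fin s) (Fin l) ℤ}

theorem apply_eq_ite (h : IsSNF M) (i : Fin s) (j : Fin l) :
    M i j = if (i : ℕ) = j then diagSeq M i else 0 := by
  by_cases hij : (i : ℕ) = j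
  · obtain ⟨j, hj⟩ := j
    subst hij
    simp [diagSeq, hj]
  · rw [if_neg hij, h.1 i j hij]

theorem diagSeq_dvd_succ (h : IsSNF M) (n : ℕ) : diagSeq M n ∣ diagSeq M (n + 1) := by
  obtain ⟨-, r, -, hdvd⟩ := h
  by_cases hn : n + 1 < s ∧ n + 1 < l
  · rw [diagSeq, diagSeq, dif_pos ⟨by omega, by omega⟩, dif_pos hn]
    exact hdvd _ _ _ _ rfl rfl rfl
  · rw [show diagSeq M (n + 1) = 0 from dif_neg hn]
    exact dvd_zero _

theorem diagSeq_nonneg (h : IsSNF M) (n : ℕ) : 0 ≤ diagSeq M n := by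
  obtain ⟨-, r, hr, -⟩ := h
  unfold diagSeq
  split_ifs with hn
  · rcases lt_or_ge n r with hnr | hnr
    · exact ((hr _ _ rfl).1 hnr).le
    · exact ((hr _ _ rfl).2 hnr).ge
  · exact le_rfl

theorem detDivisor_eq (h : IsSNF M) {k : ℕ} (hks : k ≤ s) (hkl : k ≤ l) :
    detDivisor k M = ∏ t ∈ range k, diagSeq M t :=
  detDivisor_eq_prod_range h.apply_eq_ite h.diagSeq_dvd_succ h.diagSeq_nonneg hks hkl

theorem shiftLeft_apply_eq_ite {n : ℕ} {A : Matrix (Fin s) (Fin (n + 1)) ℤ}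
    (h : IsSNF (eraseFirstCol A)) (i : Fin s) (j : Fin (n + 1)) :
    shiftLeft A i j = if (i : ℕ) = j then diagSeq (eraseFirstCol A) i else 0 := by
  induction j using Fin.lastCases with
  | last =>
    simp only [shiftLeft, diagSeq, of_apply, Fin.lastCases_last, Fin.val_last]
    split_ifs <;> first | rfl | omega
  | cast j =>
    simp only [shiftLeft, of_apply, Fin.lastCases_castSucc, Fin.val_castSucc]
    exact h.apply_eq_ite i j

end IsSNF

/-- The diagonal directly above the main diagonal of the homogeneous Smith normal form of a
homogeneous matrix `X` consists of the invariant factors of `X` (the diagonal of its Smith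
normal form), followed by zeros. -/
theorem hsnf_superdiagonal_eq_invariant_factors (s l : ℕ)
    (X : Matrix (Fin s) (Fin l) ℤ)
    (Q₁ : Matrix.GeneralLinearGroup (Fin s) ℤ) (P₁ : Matrix.GeneralLinearGroup (Fin l) ℤ)
    (Q₂ : Matrix.GeneralLinearGroup (Fin s) ℤ) (P₂ : Matrix.GeneralLinearGroup (Fin l) ℤ)
    (D A : Matrix (Fin s) (Fin l) ℤ)
    (hD : D = (Q₁ : Matrix (Fin s) (Fin s) ℤ) * X *
      ((P₁⁻¹ : Matrix.GeneralLinearGroup (Fin l) ℤ) : Matrix (Fin l) (Fin l) ℤ))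
    (hDsnf : IsSNF D)
    (hA : A = (Q₂ : Matrix (Fin s) (Fin s) ℤ) * X *
      ((P₂⁻¹ : Matrix.GeneralLinearGroup (Fin l) ℤ) : Matrix (Fin l) (Fin l) ℤ))
    (hAhsnf : IsHSNF A) :
    ∀ (i : ℕ) (his : i < s) (hil : i < l - 1),
      A ⟨i, his⟩ ⟨i + 1, by omega⟩ = D ⟨i, his⟩ ⟨i, by omega⟩ := by
  intro i his hil
  obtain ⟨n, rfl⟩ : ∃ n, l = n + 1 := ⟨l - 1, by omega⟩
  obtain ⟨hA₀, hAsnf⟩ := hAhsnf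
  have hdet : ∀ k, detDivisor k D = detDivisor k (shiftLeft A) := fun k => by
    rw [detDivisor_shiftLeft hA₀, hD, hA, detDivisor_units_mul_mul, detDivisor_units_mul_mul]
  have hprod : ∀ k ≤ min s (n + 1),
      ∏ t ∈ range k, diagSeq D t = ∏ t ∈ range k, diagSeq (eraseFirstCol A) t := fun k hk => by
    rw [← hDsnf.detDivisor_eq (by omega) (by omega), hdet,
      detDivisor_eq_prod_range hAsnf.shiftLeft_apply_eq_ite hAsnf.diagSeq_dvd_succ
        hAsnf.diagSeq_nonneg (by omega) (by omega)]
  have hdiag := eq_of_prod_range_eq_of_dvd_succ hDsnf.diagSeq_dvd_succ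
    hAsnf.diagSeq_dvd_succ hprod i (by omega)
  simpa [diagSeq, his, show i < n by omega, show i ≤ n by omega, eraseFirstCol] using hdiag.symm
end

section
/- Let G be an (additively written) abelian group, s, l positive integers, and A ∈ M_{s×l}(ℤ) a matrix all of whose rows sum to 0. Suppose D = Q·A·P⁻¹ is in Smith normal form for some Q ∈ GL_s(ℤ), P ∈ GL_l(ℤ), and let r be the number of nonzero diagonal entries α_1 = D_{11}, …, α_r = D_{rr} of D. Then r ≤ l−1, and the subgroup K := { (g_1,…,g_l) ∈ G^l : g_1 = 0 and ∑_{j=1}^{l} A_{ij}·g_j = 0 for every 1 ≤ i ≤ s } of G^l is isomorphic, as an abelian group, to (∏_{i=1}^{r} G[α_i]) × G^{l−1−r}, where G[α] := { x ∈ G : α·x = 0 } denotes the α-torsion subgroup of G. -/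
/-!
Index from `0` and change variables to `h = U P g` for some `U ∈ GL_l(ℤ)`. As `A = Q⁻¹ D P`
and `Q⁻¹` is invertible, `A g = 0` becomes `D U⁻¹ h = 0`, which is `α_i h_i = 0` for `i < r` as
soon as the first `r` rows of `U` are unit rows. With `c` the row `0` of `P⁻¹`, the condition
`g_0 = 0` becomes `c U⁻¹ h = 0`, which is `h_r = 0` when row `r` of `U` is `c`. Such a `U`
exists: `v = P 𝟙` satisfies `D v = Q A 𝟙 = 0`, so `v_i = 0` for `i < r`, while `c ⬝ v = 1`
(which also forces `r < l`). Hence the `r + 1` rows `e_0, …, e_{r-1}, c` map `ℤ^l` onto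
`ℤ^{r+1}`, and over a PID such rows extend to an invertible matrix.
-/

open Matrix

/-- The `α`-torsion subgroup `G[α] = {x ∈ G : α·x = 0}` of an abelian group `G`. -/
def torsionBy (G : Type*) [AddCommGroup G] (α : ℤ) : AddSubgroup G where
  carrier := {x | α • x = 0}
  zero_mem' := by simp
  add_mem' := by
    intro a b ha hb
    simp only [Set.mem_setOf_eq, smul_add] at *
    rw [ha, hb, add_zero]
  neg_mem' := by
    intro a ha
    simp only [Set.mem_setOf_eq, smul_neg] at *
    rw [ha, neg_zero]

/-- The subgroup `K = {(g_1,…,g_l) ∈ G^l : g_1 = 0 and ∑_j A_{ij}·g_j = 0 for all i}`. -/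
def kerSubgroup (G : Type*) [AddCommGroup G] {s l : ℕ} (hl : 0 < l)
    (A : Matrix (Fin s) (Fin l) ℤ) : AddSubgroup (Fin l → G) where
  carrier := {g | g ⟨0, hl⟩ = 0 ∧ ∀ i : Fin s, ∑ j : Fin l, A i j • g j = 0}
  zero_mem' := by
    refine ⟨rfl, fun i => ?_⟩
    simp
  add_mem' := by
    rintro a b ⟨ha0, ha⟩ ⟨hb0, hb⟩
    refine ⟨by simp [Pi.add_apply, ha0, hb0], fun i => ?_⟩
    have : ∀ j : Fin l, A i j • (a j + b j) = A i j • a j + A i j • b j := fun j => smul_add _ _ _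
    simp only [Pi.add_apply, this, Finset.sum_add_distrib, ha i, hb i, add_zero]
  neg_mem' := by
    rintro a ⟨ha0, ha⟩
    refine ⟨by simp [Pi.neg_apply, ha0], fun i => ?_⟩
    have : ∀ j : Fin l, A i j • (-(a j)) = -(A i j • a j) := fun j => smul_neg _ _
    simp only [Pi.neg_apply, this, Finset.sum_neg_distrib, ha i, neg_zero]

namespace Matrix

section toLinPi

variable {R V : Type*} [CommSemiring R] [AddCommMonoid V] [Module R V]
  {l m n : Type*} [Fintype n]

def toLinPi (M : Matrix m n R) : (n → V) →ₗ[R] (m → V) where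
  toFun g i := ∑ j, M i j • g j
  map_add' g h := by ext i; simp [smul_add, Finset.sum_add_distrib]
  map_smul' a g := by ext i; simp [Finset.smul_sum, smul_comm a]

@[simp]
theorem toLinPi_apply (M : Matrix m n R) (g : n → V) (i : m) :
    toLinPi M g i = ∑ j, M i j • g j := rfl

theorem toLinPi_mul [Fintype m] (M : Matrix l m R) (N : Matrix m n R) :
    toLinPi (V := V) (M * N) = (toLinPi M).comp (toLinPi N) := by
  ext g i
  simp only [toLinPi_apply, LinearMap.comp_apply, mul_apply, Finset.sum_smul, Finset.smul_sum,
    mul_smul]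
  exact Finset.sum_comm

@[simp]
theorem toLinPi_one [DecidableEq n] : toLinPi (V := V) (1 : Matrix n n R) = LinearMap.id := by
  ext g i
  simp [one_apply, ite_smul]

theorem toLinPi_eq_zero_iff_of_diagonal {s l r : ℕ} (hrs : r ≤ s) (hrl : r ≤ l)
    (D : Matrix (Fin s) (Fin l) R)
    (hD : ∀ i j, D i j ≠ 0 → (i : ℕ) = j ∧ (i : ℕ) < r) (w : Fin l → V) :
    toLinPi D w = 0 ↔ ∀ i : Fin r,
      D ⟨i, i.isLt.trans_le hrs⟩ ⟨i, i.isLt.trans_le hrl⟩ • w ⟨i, i.isLt.trans_le hrl⟩ = 0 := by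
  constructor
  · intro hw i
    have hwi := congrFun hw ⟨i, i.isLt.trans_le hrs⟩
    rwa [toLinPi_apply, Finset.sum_eq_single_of_mem _ (Finset.mem_univ _)] at hwi
    intro j _ hj
    by_contra hij
    exact hj (Fin.ext (hD _ _ (left_ne_zero_of_smul hij)).1.symm)
  · intro hw
    funext i
    rw [toLinPi_apply, Pi.zero_apply]
    refine Finset.sum_eq_zero fun j _ => ?_
    by_cases hij : D i j = 0
    · rw [hij, zero_smul]
    obtain ⟨hij, hir⟩ := hD i j hij
    obtain ⟨i, hi⟩ := i
    obtain ⟨j, hj⟩ := j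
    obtain rfl : i = j := hij
    exact hw ⟨i, hir⟩

end toLinPi

def GeneralLinearGroup.toLinearEquivPi {R V : Type*} [CommRing R] [AddCommGroup V] [Module R V]
    {n : Type*} [Fintype n] [DecidableEq n] (U : GL n R) : (n → V) ≃ₗ[R] (n → V) :=
  LinearEquiv.ofLinearMap (toLinPi U) (toLinPi ↑U⁻¹)
    (by rw [← toLinPi_mul, U.mul_inv, toLinPi_one]) (by rw [← toLinPi_mul, U.inv_mul, toLinPi_one])

theorem exists_generalLinearGroup_rows_eq {R : Type*} [CommRing R] [IsDomain R]
    [IsPrincipalIdealRing R] {m n : ℕ} (hmn : m ≤ n) (B : Matrix (Fin m) (Fin n) R)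
    (hB : Function.Surjective B.mulVec) :
    ∃ U : GL (Fin n) R, ∀ i, (U : Matrix (Fin n) (Fin n) R) (Fin.castLE hmn i) = B i := by
  obtain ⟨k, rfl⟩ := Nat.exists_eq_add_of_le hmn
  set F := B.mulVecLin
  -- `F` splits, so `R^(m+k) ≃ ker F × R^m`, and `ker F` is free (`R` is a PID) of rank `k`.
  obtain ⟨e, hF⟩ : ∃ e : (Fin (m + k) → R) ≃ₗ[R] LinearMap.ker F × (Fin m → R),
      F = LinearMap.snd R _ _ ∘ₗ e.toLinearMap :=
    ⟨_, ((LinearMap.exact_subtype_ker_map F).splitSurjectiveEquiv Subtype.val_injective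
      ⟨_, F.splittingOfFunOnFintypeSurjective_splits hB⟩).2.2⟩
  have hrank : Module.finrank R (LinearMap.ker F) = k := by
    have := e.finrank_eq
    simp only [Module.finrank_fin_fun, Module.finrank_prod] at this
    omega
  let E : (Fin (m + k) → R) ≃ₗ[R] (Fin (m + k) → R) :=
    e ≪≫ₗ LinearEquiv.prodComm R _ _ ≪≫ₗ
      (LinearEquiv.refl R _).prodCongr (Module.finBasisOfFinrankEq R _ hrank).equivFun ≪≫ₗ
      (LinearEquiv.sumArrowLequivProdArrow _ _ R R).symm ≪≫ₗ
      LinearEquiv.funCongrLeft R R finSumFinEquiv.symm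
  refine ⟨⟨LinearMap.toMatrix' E, LinearMap.toMatrix' E.symm, ?_, ?_⟩, fun i => ?_⟩
  · rw [← LinearMap.toMatrix'_comp, LinearEquiv.comp_coe, E.symm_trans_self]
    exact LinearMap.toMatrix'_id
  · rw [← LinearMap.toMatrix'_comp, LinearEquiv.comp_coe, E.self_trans_symm]
    exact LinearMap.toMatrix'_id
  · ext j
    have hcol : (e (Pi.single j 1)).2 = B *ᵥ Pi.single j 1 := (LinearMap.congr_fun hF _).symm
    have hcast : Fin.castLE hmn i = Fin.castAdd k i := rfl
    simp [E, LinearMap.toMatrix'_apply, hcast, hcol]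

theorem exists_generalLinearGroup_single_rows {R : Type*} [CommRing R] [IsDomain R]
    [IsPrincipalIdealRing R] {r l : ℕ} (hrl : r < l) (c v : Fin l → R) (hcv : c ⬝ᵥ v = 1)
    (hv : ∀ j : Fin l, (j : ℕ) < r → v j = 0) :
    ∃ U : GL (Fin l) R,
      (∀ j : Fin l, (j : ℕ) < r → (U : Matrix (Fin l) (Fin l) R) j = Pi.single j 1) ∧
        (U : Matrix (Fin l) (Fin l) R) ⟨r, hrl⟩ = c := by
  let B : Matrix (Fin (r + 1)) (Fin l) R :=
    fun i => if (i : ℕ) < r then Pi.single (Fin.castLE hrl i) 1 else c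
  have hB : Function.Surjective B.mulVec := by
    intro y
    -- `x₀` has the right first `r` coordinates; a multiple of `v` then corrects `c ⬝ᵥ x₀`.
    let x₀ : Fin l → R := fun j => if h : (j : ℕ) < r then y ⟨j, by omega⟩ else 0
    refine ⟨x₀ + (y (Fin.last r) - c ⬝ᵥ x₀) • v, funext fun i => ?_⟩
    by_cases hi : (i : ℕ) < r
    · simp [B, mulVec, hi, x₀, hv _ (show ((Fin.castLE hrl i : Fin l) : ℕ) < r from hi)]
    · obtain rfl : i = Fin.last r := Fin.eq_last_of_not_lt hi
      simp [B, mulVec, dotProduct_add, hcv]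
  obtain ⟨U, hU⟩ := exists_generalLinearGroup_rows_eq hrl B hB
  refine ⟨U, fun j hj => ?_, ?_⟩
  · have hj' := hU ⟨j, by omega⟩
    simp only [B, if_pos hj] at hj'
    exact hj'
  · have hr := hU (Fin.last r)
    simp only [B, Fin.val_last, lt_irrefl, if_false] at hr
    exact hr

end Matrix

section SmithCoordinates

variable {G : Type*} [AddCommGroup G]

theorem mem_kerSubgroup {s l : ℕ} (hl : 0 < l) (A : Matrix (Fin s) (Fin l) ℤ) (g : Fin l → G) :
    g ∈ kerSubgroup G hl A ↔ g ⟨0, hl⟩ = 0 ∧ toLinPi A g = 0 := by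
  simp [kerSubgroup, funext_iff]

variable (G) in
def smithKerSubgroup {r l : ℕ} (hrl : r < l) (α : Fin r → ℤ) : AddSubgroup (Fin l → G) where
  carrier := {h | h ⟨r, hrl⟩ = 0 ∧ ∀ i : Fin r, α i • h ⟨i, i.isLt.trans hrl⟩ = 0}
  zero_mem' := by simp
  add_mem' := by
    rintro g h ⟨hg, hgα⟩ ⟨hh, hhα⟩
    exact ⟨by simp [hg, hh], fun i => by simp [smul_add, hgα i, hhα i]⟩
  neg_mem' := by
    rintro h ⟨hh, hhα⟩
    exact ⟨by simp [hh], fun i => by simp [hhα i]⟩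

@[simp]
theorem mem_smithKerSubgroup {r l : ℕ} (hrl : r < l) (α : Fin r → ℤ) (h : Fin l → G) :
    h ∈ smithKerSubgroup G hrl α ↔
      h ⟨r, hrl⟩ = 0 ∧ ∀ i : Fin r, α i • h ⟨i, i.isLt.trans hrl⟩ = 0 :=
  Iff.rfl

variable (G) in
def smithKerSubgroupEquiv {r l : ℕ} (hrl : r < l) (α : Fin r → ℤ) :
    smithKerSubgroup G hrl α ≃+ (∀ i, torsionBy G (α i)) × (Fin (l - 1 - r) → G) where
  toFun h := (fun i => ⟨h.1 ⟨i, i.isLt.trans hrl⟩, h.2.2 i⟩, fun k => h.1 ⟨r + 1 + k, by omega⟩)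
  invFun p := ⟨fun j => if hj : (j : ℕ) < r then p.1 ⟨j, hj⟩
      else if hjr : (j : ℕ) = r then 0 else p.2 ⟨j - (r + 1), by have := j.isLt; omega⟩,
    by simp, fun i => by simp only [i.isLt, dif_pos]; exact (p.1 i).2⟩
  left_inv h := by
    ext j
    by_cases hj : (j : ℕ) < r
    · simp [hj]
    by_cases hjr : (j : ℕ) = r
    · obtain rfl : j = ⟨r, hrl⟩ := Fin.ext hjr
      simpa using h.2.1.symm
    · simp only [hj, hjr, dite_false]
      exact congrArg h.1 (Fin.ext (by simp only; omega))
  right_inv p := by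
    refine Prod.ext (funext fun i => ?_) (funext fun k => ?_)
    · simp
    · have hk₁ : ¬ r + 1 + (k : ℕ) < r := by omega
      have hk₂ : r + 1 + (k : ℕ) ≠ r := by omega
      simp [hk₁, hk₂]
  map_add' _ _ := rfl

theorem map_kerSubgroup_eq_smithKerSubgroup {s l r : ℕ} (hl : 0 < l) (hrs : r ≤ s) (hrl : r < l)
    (A D : Matrix (Fin s) (Fin l) ℤ) (Q : GL (Fin s) ℤ) (P U : GL (Fin l) ℤ)
    (hD : D = (Q : Matrix (Fin s) (Fin s) ℤ) * A * (↑P⁻¹ : Matrix (Fin l) (Fin l) ℤ))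
    (hsupp : ∀ i j, D i j ≠ 0 → (i : ℕ) = j ∧ (i : ℕ) < r)
    (hU : ∀ j : Fin l, (j : ℕ) < r → (U : Matrix (Fin l) (Fin l) ℤ) j = Pi.single j 1)
    (hUr : (U : Matrix (Fin l) (Fin l) ℤ) ⟨r, hrl⟩ = (↑P⁻¹ : Matrix (Fin l) (Fin l) ℤ) ⟨0, hl⟩) :
    (kerSubgroup G hl A).map
        (P.toLinearEquivPi.trans U.toLinearEquivPi).toAddEquiv.toAddMonoidHom =
      smithKerSubgroup G hrl fun i => D ⟨i, i.isLt.trans_le hrs⟩ ⟨i, i.isLt.trans hrl⟩ := by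
  have hAP : A * (↑P⁻¹ : Matrix (Fin l) (Fin l) ℤ) = (↑Q⁻¹ : Matrix (Fin s) (Fin s) ℤ) * D := by
    rw [hD, Matrix.mul_assoc, ← Matrix.mul_assoc, Q.inv_mul, Matrix.one_mul]
  ext h
  obtain ⟨w, rfl⟩ := U.toLinearEquivPi.surjective h
  have hQ : ∀ x : Fin s → G, toLinPi (↑Q⁻¹ : Matrix (Fin s) (Fin s) ℤ) x = 0 ↔ x = 0 :=
    fun x => (Q⁻¹).toLinearEquivPi.map_eq_zero_iff
  have hUw : ∀ j : Fin l, (j : ℕ) < r → toLinPi (U : Matrix (Fin l) (Fin l) ℤ) w j = w j := by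
    intro j hj
    simp [hU j hj, Pi.single_apply]
  rw [AddSubgroup.mem_map_equiv]
  change (P.toLinearEquivPi.trans U.toLinearEquivPi).symm (U.toLinearEquivPi w) ∈ _ ↔ _
  rw [LinearEquiv.trans_symm, LinearEquiv.trans_apply, LinearEquiv.symm_apply_apply]
  change toLinPi (↑P⁻¹ : Matrix (Fin l) (Fin l) ℤ) w ∈ kerSubgroup G hl A ↔
    toLinPi (U : Matrix (Fin l) (Fin l) ℤ) w ∈ smithKerSubgroup G hrl _
  rw [mem_kerSubgroup, mem_smithKerSubgroup, ← LinearMap.comp_apply, ← toLinPi_mul, hAP,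
    toLinPi_mul, LinearMap.comp_apply, hQ, toLinPi_eq_zero_iff_of_diagonal hrs hrl.le D hsupp]
  refine and_congr (by simp only [toLinPi_apply, hUr]) ?_
  refine forall_congr' fun i => ?_
  rw [hUw _ i.isLt]

end SmithCoordinates

theorem mulVec_one_apply_eq_zero_of_snf {s l r : ℕ} (hrs : r ≤ s) (hrl : r ≤ l)
    (A D : Matrix (Fin s) (Fin l) ℤ) (Q : GL (Fin s) ℤ) (P : GL (Fin l) ℤ) (hA : A *ᵥ 1 = 0)
    (hD : D = (Q : Matrix (Fin s) (Fin s) ℤ) * A * (↑P⁻¹ : Matrix (Fin l) (Fin l) ℤ))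
    (hsupp : ∀ i j, D i j ≠ 0 → (i : ℕ) = j ∧ (i : ℕ) < r)
    (hdiag : ∀ i : Fin r, D ⟨i, i.isLt.trans_le hrs⟩ ⟨i, i.isLt.trans_le hrl⟩ ≠ 0)
    (j : Fin l) (hj : (j : ℕ) < r) : ((P : Matrix (Fin l) (Fin l) ℤ) *ᵥ 1) j = 0 := by
  have hker : D *ᵥ ((P : Matrix (Fin l) (Fin l) ℤ) *ᵥ 1) = 0 := by
    rw [hD, mulVec_mulVec, Matrix.mul_assoc, P.inv_mul, Matrix.mul_one, ← mulVec_mulVec, hA,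
      mulVec_zero]
  have hj' := (toLinPi_eq_zero_iff_of_diagonal hrs hrl D hsupp _).1 hker ⟨j, hj⟩
  exact (smul_eq_zero.1 hj').resolve_left (hdiag _)

theorem kernel_iso_general (G : Type*) [AddCommGroup G] (s l : ℕ) (hl : 0 < l)
    (A : Matrix (Fin s) (Fin l) ℤ) (hA : A *ᵥ 1 = 0)
    (Q : Matrix.GeneralLinearGroup (Fin s) ℤ) (P : Matrix.GeneralLinearGroup (Fin l) ℤ)
    (D : Matrix (Fin s) (Fin l) ℤ)
    (hD : D = (Q : Matrix (Fin s) (Fin s) ℤ) * A *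
      ((P⁻¹ : Matrix.GeneralLinearGroup (Fin l) ℤ) : Matrix (Fin l) (Fin l) ℤ))
    (hDsnf : IsSNF D)
    (r : ℕ) (hrs : r ≤ s) (hrl : r ≤ l)
    (hr : ∀ (i : ℕ) (his : i < s) (hil : i < l), D ⟨i, his⟩ ⟨i, hil⟩ ≠ 0 ↔ i < r) :
    r ≤ l - 1 ∧
      Nonempty ((kerSubgroup G hl A) ≃+
        ((∀ i : Fin r, torsionBy G (D ⟨i, i.isLt.trans_le hrs⟩ ⟨i, i.isLt.trans_le hrl⟩)) ×
          (Fin (l - 1 - r) → G))) := by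
  have hsupp : ∀ i j, D i j ≠ 0 → (i : ℕ) = j ∧ (i : ℕ) < r := by
    rintro ⟨i, hi⟩ ⟨j, hj⟩ hij
    obtain rfl : i = j := by_contra fun h => hij (hDsnf.1 _ _ h)
    exact ⟨rfl, (hr i hi hj).1 hij⟩
  set c := (↑P⁻¹ : Matrix (Fin l) (Fin l) ℤ) ⟨0, hl⟩
  set v := (P : Matrix (Fin l) (Fin l) ℤ) *ᵥ 1
  have hv : ∀ j : Fin l, (j : ℕ) < r → v j = 0 :=
    mulVec_one_apply_eq_zero_of_snf hrs hrl A D Q P hA hD hsupp fun i => (hr i _ _).2 i.isLt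
  have hcv : c ⬝ᵥ v = 1 := by
    change ((↑P⁻¹ : Matrix (Fin l) (Fin l) ℤ) *ᵥ v) ⟨0, hl⟩ = 1
    rw [mulVec_mulVec, P.inv_mul, one_mulVec]
    rfl
  have hrl' : r < l := by
    by_contra! hlr
    have hv0 : v = 0 := funext fun j => hv j (j.isLt.trans_le hlr)
    rw [hv0, dotProduct_zero] at hcv
    exact zero_ne_one hcv
  obtain ⟨U, hU, hUr⟩ := exists_generalLinearGroup_single_rows hrl' c v hcv hv
  exact ⟨by omega, ⟨(AddEquiv.addSubgroupMap
    (P.toLinearEquivPi.trans U.toLinearEquivPi).toAddEquiv _).trans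
    ((AddEquiv.addSubgroupCongr (map_kerSubgroup_eq_smithKerSubgroup hl hrs hrl' A D Q P U hD
      hsupp hU hUr)).trans (smithKerSubgroupEquiv G hrl' _))⟩⟩

/-- If `D = Q·A·P⁻¹` is the Smith normal form of a homogeneous matrix `A`, with `r` nonzero
diagonal entries (the invariant factors `α_i = D_{ii}`), then `r ≤ l-1` and the subgroup
`K = {(g_1,…,g_l) ∈ G^l : g_1 = 0, ∑_j A_{ij} g_j = 0 ∀i}` of `G^l` is isomorphic to
`(∏_{i=1}^r G[α_i]) × G^{l-1-r}`. -/
theorem kernel_iso (G : Type*) [AddCommGroup G] (s l : ℕ) (hs : 0 < s) (hl : 0 < l)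
    (A : Matrix (Fin s) (Fin l) ℤ) (hA : A *ᵥ 1 = 0)
    (Q : Matrix.GeneralLinearGroup (Fin s) ℤ) (P : Matrix.GeneralLinearGroup (Fin l) ℤ)
    (D : Matrix (Fin s) (Fin l) ℤ)
    (hD : D = (Q : Matrix (Fin s) (Fin s) ℤ) * A *
      ((P⁻¹ : Matrix.GeneralLinearGroup (Fin l) ℤ) : Matrix (Fin l) (Fin l) ℤ))
    (hDsnf : IsSNF D)
    (r : ℕ) (hrs : r ≤ s) (hrl : r ≤ l)
    (hr : ∀ (i : ℕ) (his : i < s) (hil : i < l), D ⟨i, his⟩ ⟨i, hil⟩ ≠ 0 ↔ i < r) :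
    r ≤ l - 1 ∧
      Nonempty ((kerSubgroup G hl A) ≃+
        ((∀ i : Fin r, torsionBy G (D ⟨i, i.isLt.trans_le hrs⟩ ⟨i, i.isLt.trans_le hrl⟩)) ×
          (Fin (l - 1 - r) → G))) :=
  kernel_iso_general G s l hl A hA Q P D hD hDsnf r hrs hrl hr
end

section
/- Let S ⊂ ℤ² be a finite set and let Δ := convexHull_ℝ({(x,y) ∈ ℝ² : (x,y) is the image of a point of S}) be the corresponding convex lattice polygon; assume the interior of Δ in ℝ² is nonempty. Then the interior of Δ contains no point of ℤ² if and only if either (a) Δ has lattice width one, i.e. there exist a nonzero n ∈ ℤ² and c ∈ ℤ such that c ≤ n₁x + n₂y ≤ c+1 for every (x,y) ∈ Δ; or (b) Δ is twice a primitive triangle, i.e. there exist v, a, b ∈ ℤ² with |a₁b₂ − a₂b₁| = 1 such that Δ is the convex hull in ℝ² of the three points v, v+2a, v+2b. -/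
/-!
If two distinct lattice points `p`, `p + 2w` of `Δ` are congruent modulo 2, their midpoint is a
lattice point on the boundary, so `Δ` lies on one side of the chord. Write `w = g d` with `d`
primitive and let `T` be the largest lattice height of `Δ` above the chord. If `T ≤ 1` the width
is one. Otherwise the triangle spanned by the chord and a highest vertex has an interior lattice
point at height one, unless `g = 1`, `T = 2` and that vertex is congruent to `p` modulo 2; then
the triangle is twice a primitive triangle whose edge midpoints are lattice points on the
boundary of `Δ`, and this forces `Δ` to be the triangle.

If no two lattice points of `Δ` are congruent modulo 2, every lattice triangle in `Δ` is
unimodular: a larger one contains a lattice point other than its vertices, either interior or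
inside an edge, and the latter gives two congruent lattice points on that edge. Given a
unimodular triangle `A B C` in `Δ`, any other lattice point is congruent to `B + C - A` modulo 2,
and unimodularity of the triangles it forms with `A`, `B`, `C` puts it on one of the two lattice
lines through `B + C - A` parallel to `A C` or to `A B`; either way the width is one.

Conversely, interior points satisfy the inequalities defining a strip or a triangle strictly,
which leaves no room for integer values.
-/

open Set

namespace LatticePolygon

def cross {R : Type*} [CommRing R] (u v : R × R) : R := u.1 * v.2 - u.2 * v.1

section Cross

variable {R : Type*} [CommRing R]

@[simp] theorem cross_self (u : R × R) : cross u u = 0 := by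
  simp [cross]; ring

theorem cross_anticomm (u v : R × R) : cross v u = -cross u v := by
  simp [cross]; ring

@[simp] theorem cross_neg_left (u v : R × R) : cross (-u) v = -cross u v := by
  simp [cross]; ring

theorem cross_smul_left (g : R) (u v : R × R) : cross (g • u) v = g * cross u v := by
  simp [cross]; ring

theorem cross_sub_right (u x a : R × R) : cross u (x - a) = cross u x - cross u a := by
  simp [cross]; ring

theorem cross_sub_rotate (A B C : R × R) : cross (C - B) (A - B) = cross (B - A) (C - A) := by
  simp [cross]; ring

/-- The three terms on the left are the barycentric coordinates of `w` with respect to the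
triangle `A B C`, scaled by `cross (B - A) (C - A)`. -/
theorem cross_add_cross_add_cross (A B C w : R × R) :
    cross (C - B) (w - B) + cross (A - C) (w - C) + cross (B - A) (w - A) =
      cross (B - A) (C - A) := by
  simp [cross]; ring

theorem cross_smul_eq (u v x : R × R) : cross u v • x = cross x v • u + cross u x • v := by
  ext <;> simp [cross] <;> ring

theorem eq_cross_smul_add_cross_smul {u v : R × R} (huv : cross u v = 1) (x : R × R) :
    x = cross x v • u + cross u x • v := by
  simpa [huv] using cross_smul_eq u v x

end Cross

def ι : ℤ × ℤ →+ ℝ × ℝ := (Int.castAddHom ℝ).prodMap (Int.castAddHom ℝ)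

@[simp] theorem ι_apply (p : ℤ × ℤ) : ι p = ((p.1 : ℝ), (p.2 : ℝ)) := rfl

@[simp] theorem ι_eq_zero {u : ℤ × ℤ} : ι u = 0 ↔ u = 0 := by
  simp [Prod.ext_iff]

@[simp] theorem cross_ι (u v : ℤ × ℤ) : cross (ι u) (ι v) = cross u v := by
  simp [cross]

theorem cross_ι_sub_ι (a b c d : ℤ × ℤ) :
    cross (ι a - ι b) (ι c - ι d) = cross (a - b) (c - d) := by
  rw [← map_sub, ← map_sub, cross_ι]

theorem ι_mem_convexHull_image {S : Set (ℤ × ℤ)} {s : ℤ × ℤ} (hs : s ∈ S) :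
    ι s ∈ convexHull ℝ (ι '' S) :=
  subset_convexHull ℝ _ (mem_image_of_mem ι hs)

theorem lt_apply_of_mem_interior {E : Type*} [AddCommGroup E] [TopologicalSpace E] [Module ℝ E]
    [ContinuousAdd E] [ContinuousSMul ℝ E] {K : Set E} {f : E →L[ℝ] ℝ} (hf : f ≠ 0) {b : ℝ}
    (h : ∀ y ∈ K, b ≤ f y) {x : E} (hx : x ∈ interior K) : b < f x := by
  have : f '' interior K ⊆ Ioi b := by
    rw [← interior_Ici]
    exact interior_maximal (image_subset_iff.2 fun y hy => h y (interior_subset hy))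
      (f.isOpenMap_of_ne_zero hf _ isOpen_interior)
  exact this ⟨x, hx, rfl⟩

theorem lt_cross_of_mem_interior {K : Set (ℝ × ℝ)} {u : ℝ × ℝ} (hu : u ≠ 0) {b : ℝ}
    (h : ∀ y ∈ K, b ≤ cross u y) {x : ℝ × ℝ} (hx : x ∈ interior K) : b < cross u x := by
  let f : (ℝ × ℝ) →L[ℝ] ℝ :=
    (-u.2) • ContinuousLinearMap.fst ℝ ℝ ℝ + u.1 • ContinuousLinearMap.snd ℝ ℝ ℝ
  have hf (y : ℝ × ℝ) : f y = cross u y := by simp [f, cross]; ring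
  refine hf x ▸ lt_apply_of_mem_interior (fun h0 => hu ?_) (fun y hy => hf y ▸ h y hy) hx
  have h₁ := hf (1, 0)
  have h₂ := hf (0, 1)
  simp [h0, cross] at h₁ h₂
  ext <;> simp [h₁, h₂]

theorem cross_mem_Ioo_of_mem_interior {K : Set (ℝ × ℝ)} {u : ℝ × ℝ} (hu : u ≠ 0) {a b : ℝ}
    (h : ∀ y ∈ K, cross u y ∈ Icc a b) {x : ℝ × ℝ} (hx : x ∈ interior K) :
    cross u x ∈ Ioo a b := by
  refine ⟨lt_cross_of_mem_interior hu (fun y hy => (h y hy).1) hx, neg_lt_neg_iff.1 ?_⟩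
  simpa using lt_cross_of_mem_interior (neg_ne_zero.2 hu) (b := -b)
    (fun y hy => by simpa using (h y hy).2) hx

theorem cross_mem_of_mem_convexHull {s : Set (ℝ × ℝ)} {t : Set ℝ} (ht : Convex ℝ t)
    {u : ℝ × ℝ} (h : ∀ y ∈ s, cross u y ∈ t) : ∀ y ∈ convexHull ℝ s, cross u y ∈ t :=
  fun _ hy => convexHull_min h (ht.is_linear_preimage (f := cross u)
    ⟨fun x y => by simp [cross]; ring, fun c x => by simp [cross]; ring⟩) hy

theorem isOpen_cross_pos (u a : ℝ × ℝ) : IsOpen {w | 0 < cross u (w - a)} :=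
  isOpen_lt continuous_const (by unfold cross; fun_prop)

theorem smul_add_smul_add_smul_mem_convexHull {E : Type*} [AddCommGroup E] [Module ℝ E]
    (A B C : E) {a b c : ℝ} (ha : 0 ≤ a) (hb : 0 ≤ b) (hc : 0 ≤ c) (habc : a + b + c = 1) :
    a • A + b • B + c • C ∈ convexHull ℝ {A, B, C} := by
  have h := (convex_convexHull ℝ ({A, B, C} : Set E)).sum_mem (t := Finset.univ)
    (w := ![a, b, c]) (z := ![A, B, C]) (fun i _ => by fin_cases i <;> simpa)
    (by simp [Fin.sum_univ_three, habc])
    (fun i _ => by fin_cases i <;> apply subset_convexHull <;> simp)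
  simpa [Fin.sum_univ_three, add_assoc] using h

theorem mem_convexHull_of_cross_nonneg {A B C w : ℝ × ℝ} (hD : 0 < cross (B - A) (C - A))
    (hA : 0 ≤ cross (C - B) (w - B)) (hB : 0 ≤ cross (A - C) (w - C))
    (hC : 0 ≤ cross (B - A) (w - A)) : w ∈ convexHull ℝ {A, B, C} := by
  have hsum := cross_add_cross_add_cross A B C w
  have hw : w = (cross (C - B) (w - B) / cross (B - A) (C - A)) • A +
      (cross (A - C) (w - C) / cross (B - A) (C - A)) • B +
      (cross (B - A) (w - A) / cross (B - A) (C - A)) • C := by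
    ext <;> simp <;> field_simp <;> simp [cross] <;> ring
  rw [hw]
  exact smul_add_smul_add_smul_mem_convexHull A B C (by positivity) (by positivity)
    (by positivity) (by field_simp; linarith)

theorem mem_interior_of_cross_pos {K : Set (ℝ × ℝ)} (hK : Convex ℝ K) {A B C z : ℝ × ℝ}
    (hA : A ∈ K) (hB : B ∈ K) (hC : C ∈ K) (hzA : 0 < cross (C - B) (z - B))
    (hzB : 0 < cross (A - C) (z - C)) (hzC : 0 < cross (B - A) (z - A)) :
    z ∈ interior K := by
  refine interior_maximal ?_ (((isOpen_cross_pos _ _).inter (isOpen_cross_pos _ _)).inter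
    (isOpen_cross_pos _ _)) ⟨⟨hzA, hzB⟩, hzC⟩
  rintro w ⟨⟨h₁, h₂⟩, h₃⟩
  have hD : 0 < cross (B - A) (C - A) := by
    rw [← cross_add_cross_add_cross A B C w]
    exact add_pos (add_pos h₁ h₂) h₃
  exact convexHull_min (by simp [insert_subset_iff, hA, hB, hC]) hK
    (mem_convexHull_of_cross_nonneg hD h₁.le h₂.le h₃.le)

theorem cross_pos_of_mem_interior_convexHull {A B C x : ℝ × ℝ}
    (hD : 0 < cross (B - A) (C - A)) (hx : x ∈ interior (convexHull ℝ {A, B, C})) :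
    0 < cross (C - B) (x - B) ∧ 0 < cross (A - C) (x - C) ∧ 0 < cross (B - A) (x - A) := by
  have key (A B C : ℝ × ℝ) (hD : 0 < cross (B - A) (C - A))
      (hx : x ∈ interior (convexHull ℝ {A, B, C})) : 0 < cross (B - A) (x - A) := by
    have hBA : B - A ≠ 0 := fun h => by simp [h, cross] at hD
    rw [cross_sub_right, sub_pos]
    refine lt_cross_of_mem_interior hBA (fun y hy => ?_) hx
    refine cross_mem_of_mem_convexHull (convex_Ici _) ?_ y hy
    rintro _ (rfl | rfl | rfl) <;> rw [mem_Ici, ← sub_nonneg, ← cross_sub_right]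
    · simp [cross]
    · simp
    · exact hD.le
  have hrot : ({A, B, C} : Set (ℝ × ℝ)) = {B, C, A} := by
    rw [insert_comm, pair_comm]
  refine ⟨key B C A ?_ (hrot ▸ hx), key C A B ?_ ?_, key A B C hD hx⟩
  · rwa [cross_sub_rotate]
  · rwa [cross_sub_rotate, cross_sub_rotate]
  · rwa [hrot, insert_comm, pair_comm] at hx

theorem mem_interior_of_mem_openSegment {K : Set (ℝ × ℝ)} (hK : Convex ℝ K)
    {x y a b z : ℝ × ℝ} (hx : x ∈ K) (hy : y ∈ K) (ha : a ∈ K) (hb : b ∈ K)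
    (hz : z ∈ openSegment ℝ x y) (ha' : 0 < cross (y - x) (a - x))
    (hb' : cross (y - x) (b - x) < 0) : z ∈ interior K := by
  have hflip (w : ℝ × ℝ) : cross (x - y) (w - y) = -cross (y - x) (w - x) := by
    simp [cross]; ring
  have hsub : {w | 0 < cross (a - y) (w - y)} ∩ {w | 0 < cross (x - a) (w - a)} ∩
      ({w | 0 < cross (b - x) (w - x)} ∩ {w | 0 < cross (y - b) (w - b)}) ⊆ K := by
    rintro w ⟨⟨h₁, h₂⟩, h₃, h₄⟩
    rcases le_or_gt 0 (cross (y - x) (w - x)) with hw | hw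
    · exact convexHull_min (by simp [insert_subset_iff, hx, hy, ha]) hK
        (mem_convexHull_of_cross_nonneg ha' h₁.le h₂.le hw)
    · exact convexHull_min (by simp [insert_subset_iff, hx, hy, hb]) hK
        (mem_convexHull_of_cross_nonneg (by rw [hflip]; linarith) h₃.le h₄.le
          (by rw [hflip]; linarith))
  refine interior_maximal hsub (((isOpen_cross_pos _ _).inter (isOpen_cross_pos _ _)).inter
    ((isOpen_cross_pos _ _).inter (isOpen_cross_pos _ _))) ?_
  obtain ⟨α, β, hα, hβ, hαβ, rfl⟩ := hz
  obtain rfl : β = 1 - α := eq_sub_of_add_eq' hαβ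
  have e₁ : cross (a - y) (α • x + (1 - α) • y - y) = α * cross (y - x) (a - x) := by
    simp [cross]; ring
  have e₂ : cross (x - a) (α • x + (1 - α) • y - a) = (1 - α) * cross (y - x) (a - x) := by
    simp [cross]; ring
  have e₃ : cross (b - x) (α • x + (1 - α) • y - x) = (1 - α) * -cross (y - x) (b - x) := by
    simp [cross]; ring
  have e₄ : cross (y - b) (α • x + (1 - α) • y - b) = α * -cross (y - x) (b - x) := by
    simp [cross]; ring
  refine ⟨⟨?_, ?_⟩, ?_, ?_⟩ <;> simp only [mem_ofPred_eq, e₁, e₂, e₃, e₄] <;>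
    exact mul_pos (by assumption) (by linarith)

theorem cross_nonneg_of_notMem_interior {K : Set (ℝ × ℝ)} (hK : Convex ℝ K)
    {x y a z : ℝ × ℝ} (hx : x ∈ K) (hy : y ∈ K) (ha : a ∈ K) (hz : z ∈ openSegment ℝ x y)
    (hzK : z ∉ interior K) (ha' : 0 < cross (y - x) (a - x)) {b : ℝ × ℝ} (hb : b ∈ K) :
    0 ≤ cross (y - x) (b - x) :=
  not_lt.1 fun hb' => hzK (mem_interior_of_mem_openSegment hK hx hy ha hb hz ha' hb')

theorem subset_convexHull_of_notMem_interior {K : Set (ℝ × ℝ)} (hK : Convex ℝ K)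
    {A B C zAB zBC zCA : ℝ × ℝ} (hA : A ∈ K) (hB : B ∈ K) (hC : C ∈ K)
    (hD : 0 < cross (B - A) (C - A)) (hAB : zAB ∈ openSegment ℝ A B)
    (hBC : zBC ∈ openSegment ℝ B C) (hCA : zCA ∈ openSegment ℝ C A)
    (hAB' : zAB ∉ interior K) (hBC' : zBC ∉ interior K) (hCA' : zCA ∉ interior K) :
    K ⊆ convexHull ℝ {A, B, C} := fun _ hw =>
  mem_convexHull_of_cross_nonneg hD
    (cross_nonneg_of_notMem_interior hK hB hC hA hBC hBC' (cross_sub_rotate A B C ▸ hD) hw)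
    (cross_nonneg_of_notMem_interior hK hC hA hB hCA hCA'
      (cross_sub_rotate B C A ▸ cross_sub_rotate A B C ▸ hD) hw)
    (cross_nonneg_of_notMem_interior hK hA hB hC hAB hAB' hD hw)

def HasLatticeWidthOne (Δ : Set (ℝ × ℝ)) : Prop :=
  ∃ n : ℤ × ℤ, n ≠ 0 ∧ ∃ c : ℤ, ∀ x ∈ Δ,
    (c : ℝ) ≤ (n.1 : ℝ) * x.1 + (n.2 : ℝ) * x.2 ∧ (n.1 : ℝ) * x.1 + (n.2 : ℝ) * x.2 ≤ (c : ℝ) + 1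

def IsTwicePrimitiveTriangle (Δ : Set (ℝ × ℝ)) : Prop :=
  ∃ v a b : ℤ × ℤ, |cross a b| = 1 ∧ Δ = convexHull ℝ {ι v, ι (v + 2 • a), ι (v + 2 • b)}

def HasCongrModTwoPair (K : Set (ℝ × ℝ)) : Prop :=
  ∃ p w : ℤ × ℤ, w ≠ 0 ∧ ι p ∈ K ∧ ι (p + 2 • w) ∈ K

theorem HasLatticeWidthOne.ι_notMem_interior {Δ : Set (ℝ × ℝ)} (h : HasLatticeWidthOne Δ)
    (p : ℤ × ℤ) : ι p ∉ interior Δ := by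
  obtain ⟨n, hn, c, hc⟩ := h
  intro hp
  have hdot (x : ℝ × ℝ) : (n.1 : ℝ) * x.1 + (n.2 : ℝ) * x.2 = cross (ι (n.2, -n.1)) x := by
    simp [cross]; ring
  have hu : ι (n.2, -n.1) ≠ 0 := by simpa [Prod.ext_iff, and_comm] using hn
  obtain ⟨h₁, h₂⟩ := cross_mem_Ioo_of_mem_interior hu (a := c) (b := c + 1)
    (fun y hy => hdot y ▸ hc y hy) hp
  rw [cross_ι] at h₁ h₂
  have h₁' : c < cross (n.2, -n.1) p := mod_cast h₁
  have h₂' : cross (n.2, -n.1) p < c + 1 := mod_cast h₂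
  omega

theorem IsTwicePrimitiveTriangle.ι_notMem_interior {Δ : Set (ℝ × ℝ)}
    (h : IsTwicePrimitiveTriangle Δ) (p : ℤ × ℤ) : ι p ∉ interior Δ := by
  obtain ⟨v, a, b, hab, rfl⟩ := h
  wlog hab1 : cross a b = 1 generalizing a b
  · refine pair_comm (ι (v + 2 • a)) (ι (v + 2 • b)) ▸
      this b a (by rwa [cross_anticomm, abs_neg]) ?_
    rw [cross_anticomm]
    rcases abs_eq (zero_le_one' ℤ) |>.1 hab with h | h <;> omega
  intro hp
  have hD : cross (v + 2 • a - v) (v + 2 • b - v) = 4 := by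
    simp [cross] at hab1 ⊢
    linear_combination 4 * hab1
  obtain ⟨h₁, h₂, h₃⟩ := cross_pos_of_mem_interior_convexHull
    (by rw [cross_ι_sub_ι, hD]; norm_num) hp
  simp only [cross_ι_sub_ι, Int.cast_pos] at h₁ h₂ h₃
  have e₁ : cross (v + 2 • b - (v + 2 • a)) (p - (v + 2 • a)) =
      4 * cross a b - 2 * cross (p - v) b - 2 * cross a (p - v) := by
    simp [cross]; ring
  have e₂ : cross (v - (v + 2 • b)) (p - (v + 2 • b)) = 2 * cross (p - v) b := by
    simp [cross]; ring
  have e₃ : cross (v + 2 • a - v) (p - v) = 2 * cross a (p - v) := by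
    simp [cross]; ring
  omega

theorem ι_mem_openSegment {x y m : ℤ × ℤ} (h : x + y = 2 • m) :
    ι m ∈ openSegment ℝ (ι x) (ι y) := by
  refine ⟨1 / 2, 1 / 2, by norm_num, by norm_num, by norm_num, ?_⟩
  have h₁ : (x.1 : ℝ) + y.1 = 2 * m.1 := mod_cast congrArg Prod.fst h
  have h₂ : (x.2 : ℝ) + y.2 = 2 * m.2 := mod_cast congrArg Prod.snd h
  ext <;> simp <;> linarith

theorem ι_mem_of_smul_sub_eq {K : Set (ℝ × ℝ)} (hK : Convex ℝ K) {b c z : ℤ × ℤ} {D t : ℤ}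
    (hb : ι b ∈ K) (hc : ι c ∈ K) (hD : 0 < D) (ht : 0 ≤ t) (htD : t ≤ D)
    (h : D • (z - b) = t • (c - b)) : ι z ∈ K := by
  have hD : (0 : ℝ) < D := mod_cast hD
  have h₁ : (D : ℝ) * (z.1 - b.1) = t * (c.1 - b.1) := mod_cast congrArg Prod.fst h
  have h₂ : (D : ℝ) * (z.2 - b.2) = t * (c.2 - b.2) := mod_cast congrArg Prod.snd h
  have hz : ι z = ι b + ((t : ℝ) / D) • (ι c - ι b) := by
    ext <;> simp <;> field_simp <;> linarith
  rw [hz]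
  exact hK.add_smul_sub_mem hb hc ⟨by positivity, (div_le_one hD).2 (mod_cast htD)⟩

theorem ι_mem_interior_of_cross_pos {K : Set (ℝ × ℝ)} (hK : Convex ℝ K) {A B C z : ℤ × ℤ}
    (hA : ι A ∈ K) (hB : ι B ∈ K) (hC : ι C ∈ K) (hzA : 0 < cross (C - B) (z - B))
    (hzB : 0 < cross (A - C) (z - C)) (hzC : 0 < cross (B - A) (z - A)) :
    ι z ∈ interior K :=
  mem_interior_of_cross_pos hK hA hB hC (by rw [cross_ι_sub_ι]; exact_mod_cast hzA)
    (by rw [cross_ι_sub_ι]; exact_mod_cast hzB) (by rw [cross_ι_sub_ι]; exact_mod_cast hzC)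

theorem exists_cross_ne_zero {S : Set (ℤ × ℤ)}
    (h : (interior (convexHull ℝ (ι '' S))).Nonempty) :
    ∃ A ∈ S, ∃ B ∈ S, ∃ C ∈ S, cross (B - A) (C - A) ≠ 0 := by
  by_contra! hS
  obtain ⟨x, hx⟩ := h
  obtain ⟨A, hA⟩ : S.Nonempty := by
    rcases S.eq_empty_or_nonempty with rfl | h
    · simp at hx
    · exact h
  obtain ⟨u, hu, hSu⟩ : ∃ u : ℤ × ℤ, u ≠ 0 ∧ ∀ s ∈ S, cross u s = cross u A := by
    by_cases hB : ∃ B ∈ S, B ≠ A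
    · obtain ⟨B, hB, hBA⟩ := hB
      exact ⟨B - A, sub_ne_zero.2 hBA, fun s hs => by
        simpa [cross_sub_right, sub_eq_zero] using hS A hA B hB s hs⟩
    · push Not at hB
      exact ⟨(1, 0), by simp, fun s hs => by rw [hB s hs]⟩
  have hline := cross_mem_of_mem_convexHull (convex_Icc ((cross u A : ℤ) : ℝ) (cross u A : ℤ))
    (u := ι u) (s := ι '' S) (by rintro _ ⟨s, hs, rfl⟩; rw [cross_ι, hSu s hs]; simp)
  have := cross_mem_Ioo_of_mem_interior (ι_eq_zero.not.2 hu) hline hx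
  exact (lt_irrefl _ (this.1.trans this.2)).elim

theorem hasLatticeWidthOne_of_cross_bounds {S : Set (ℤ × ℤ)} {u : ℤ × ℤ} (hu : u ≠ 0) {c : ℤ}
    (h : ∀ s ∈ S, c ≤ cross u s ∧ cross u s ≤ c + 1) :
    HasLatticeWidthOne (convexHull ℝ (ι '' S)) := by
  refine ⟨(-u.2, u.1), fun h0 => hu ?_, c, fun x hx => ?_⟩
  · simp only [Prod.ext_iff, Prod.fst_zero, Prod.snd_zero, neg_eq_zero] at h0 ⊢
    exact h0.symm
  have hx := cross_mem_of_mem_convexHull (convex_Icc (c : ℝ) ((c : ℝ) + 1)) (u := ι u)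
    (by rintro _ ⟨s, hs, rfl⟩; rw [cross_ι]; exact ⟨mod_cast (h s hs).1, mod_cast (h s hs).2⟩)
    x hx
  simp only [cross, ι_apply] at hx
  push_cast
  constructor <;> linarith [hx.1, hx.2]

theorem exists_eq_smul_cross_eq_one {w : ℤ × ℤ} (hw : w ≠ 0) :
    ∃ g : ℤ, ∃ d e : ℤ × ℤ, 0 < g ∧ w = g • d ∧ cross d e = 1 := by
  obtain ⟨g, d₁, d₂, hg, hd, h₁, h₂⟩ := Int.exists_gcd_one' (m := w.1) (n := w.2)
    (Int.gcd_pos_iff.2 (by by_contra! h; exact hw (Prod.ext h.1 h.2)))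
  obtain ⟨a, b, hab⟩ := Int.isCoprime_iff_gcd_eq_one.2 hd
  exact ⟨g, (d₁, d₂), (-b, a), mod_cast hg, by ext <;> simp [h₁, h₂, mul_comm],
    by simp [cross]; linarith⟩

theorem hasCongrModTwoPair_of_smul_sub_eq {K : Set (ℝ × ℝ)} (hK : Convex ℝ K)
    {b c z : ℤ × ℤ} {D t : ℤ} (hb : ι b ∈ K) (hc : ι c ∈ K) (hbc : b ≠ c) (ht : 0 < t)
    (htD : t < D) (h : D • (z - b) = t • (c - b)) : HasCongrModTwoPair K := by
  wlog h2t : 2 * t ≤ D generalizing b c t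
  · exact this (t := D - t) hc hb hbc.symm (by omega) (by omega)
      (by linear_combination (norm := module) h) (by omega)
  refine ⟨b, z - b, fun h0 => ?_, hb, ι_mem_of_smul_sub_eq hK hb hc (by omega) (t := 2 * t)
    (by omega) h2t (by linear_combination (norm := module) (2 : ℤ) • h)⟩
  rw [h0, smul_zero, eq_comm, smul_eq_zero, sub_eq_zero] at h
  exact h.elim ht.ne' hbc.symm

theorem eq_of_not_hasCongrModTwoPair {K : Set (ℝ × ℝ)} (hpair : ¬HasCongrModTwoPair K)
    {r s w : ℤ × ℤ} (hr : ι r ∈ K) (hs : ι s ∈ K) (h : s = r + 2 • w) : s = r := by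
  by_contra hne
  exact hpair ⟨r, w, by rintro rfl; simp [h] at hne, hr, h ▸ hs⟩

/-- `x` is a nonzero residue of `ℤ²` modulo the lattice spanned by `u` and `v`, in the
coordinates of `cross u v • x = cross x v • u + cross u x • v` reduced into `[0, cross u v)`. -/
theorem exists_nonzero_residue_cross {u v : ℤ × ℤ} (hD : 2 ≤ cross u v) :
    ∃ x : ℤ × ℤ, 0 ≤ cross x v ∧ cross x v < cross u v ∧ 0 ≤ cross u x ∧
      cross u x < cross u v ∧ (cross x v ≠ 0 ∨ cross u x ≠ 0) := by
  obtain ⟨y, hy⟩ : ∃ y : ℤ × ℤ, ¬(cross u v ∣ cross y v ∧ cross u v ∣ cross u y) := by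
    -- otherwise `cross u v` divides every coordinate of `u` and `v`, so its square divides it
    by_contra! h
    obtain ⟨⟨k₁, hk₁⟩, ⟨k₂, hk₂⟩⟩ := h (1, 0)
    obtain ⟨⟨k₃, hk₃⟩, ⟨k₄, hk₄⟩⟩ := h (0, 1)
    generalize hD' : cross u v = D at *
    simp only [cross] at hk₁ hk₂ hk₃ hk₄ hD'
    have h₁ : D * (D * (k₄ * k₁ - k₂ * k₃)) = D * 1 := by
      linear_combination hD' - D * k₄ * hk₁ - v.2 * hk₄ + D * k₂ * hk₃ - v.1 * hk₂
    have h₂ := Int.eq_one_of_mul_eq_one_right (by omega) (mul_left_cancel₀ (by omega) h₁)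
    omega
  refine ⟨y - (cross y v / cross u v) • u - (cross u y / cross u v) • v, ?_⟩
  have e₁ : cross (y - (cross y v / cross u v) • u - (cross u y / cross u v) • v) v =
      cross y v % cross u v := by
    rw [Int.emod_def]; simp [cross]; ring
  have e₂ : cross u (y - (cross y v / cross u v) • u - (cross u y / cross u v) • v) =
      cross u y % cross u v := by
    rw [Int.emod_def]; simp [cross]; ring
  rw [e₁, e₂]
  refine ⟨Int.emod_nonneg _ (by omega), Int.emod_lt_of_pos _ (by omega),
    Int.emod_nonneg _ (by omega), Int.emod_lt_of_pos _ (by omega), ?_⟩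
  simpa only [Ne, ← Int.dvd_iff_emod_eq_zero, not_and_or] using hy

theorem abs_cross_le_one {K : Set (ℝ × ℝ)} (hK : Convex ℝ K) (hno : ∀ q, ι q ∉ interior K)
    (hpair : ¬HasCongrModTwoPair K) {A B C : ℤ × ℤ} (hA : ι A ∈ K) (hB : ι B ∈ K)
    (hC : ι C ∈ K) : |cross (B - A) (C - A)| ≤ 1 := by
  wlog hD : 0 ≤ cross (B - A) (C - A) generalizing B C
  · simpa [cross_anticomm (B - A)] using this hC hB (by rw [cross_anticomm]; linarith)
  rw [abs_of_nonneg hD]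
  by_contra! hD₂
  have hAB : A ≠ B := by rintro rfl; simp [cross] at hD₂
  have hAC : A ≠ C := by rintro rfl; simp [cross] at hD₂
  have hBC : B ≠ C := by rintro rfl; rw [cross_self] at hD₂; omega
  obtain ⟨x, hσ, hσD, hτ, hτD, hne⟩ :=
    exists_nonzero_residue_cross (u := B - A) (v := C - A) (by omega)
  set D := cross (B - A) (C - A)
  set σ := cross x (C - A)
  set τ := cross (B - A) x
  have hx : D • x = σ • (B - A) + τ • (C - A) := cross_smul_eq _ _ _
  -- `A + x` lies in the closed triangle `A B C` when `σ + τ ≤ D`, and `B + C - A - x` otherwise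
  rcases lt_trichotomy (σ + τ) D with hlt | heq | hgt
  · rcases hσ.eq_or_lt with hσ₀ | hσ₀
    · refine hpair (hasCongrModTwoPair_of_smul_sub_eq hK hA hC hAC (z := A + x)
        (lt_of_le_of_ne hτ (by omega)) hτD ?_)
      rw [add_sub_cancel_left, hx, ← hσ₀, zero_smul, zero_add]
    rcases hτ.eq_or_lt with hτ₀ | hτ₀
    · refine hpair (hasCongrModTwoPair_of_smul_sub_eq hK hA hB hAB (z := A + x) hσ₀ hσD ?_)
      rw [add_sub_cancel_left, hx, ← hτ₀, zero_smul, add_zero]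
    refine hno (A + x) (ι_mem_interior_of_cross_pos hK hA hB hC ?_ ?_ ?_)
    · have : cross (C - B) (A + x - B) = D - σ - τ := by simp [D, σ, τ, cross]; ring
      omega
    · have : cross (A - C) (A + x - C) = σ := by simp [σ, cross]; ring
      omega
    · simpa using hτ₀
  · exact hpair (hasCongrModTwoPair_of_smul_sub_eq hK hB hC hBC (z := A + x) (by omega) hτD
      (by linear_combination (norm := module) hx + heq • (B - A)))
  · refine hno (B + C - A - x) (ι_mem_interior_of_cross_pos hK hA hB hC ?_ ?_ ?_)
    · have : cross (C - B) (B + C - A - x - B) = σ + τ - D := by simp [D, σ, τ, cross]; ring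
      omega
    · have : cross (A - C) (B + C - A - x - C) = D - σ := by simp [D, σ, cross]; ring
      omega
    · have : cross (B - A) (B + C - A - x - A) = D - τ := by simp [D, τ, cross]; ring
      omega

theorem eq_or_odd_of_not_hasCongrModTwoPair {K : Set (ℝ × ℝ)} (hpair : ¬HasCongrModTwoPair K)
    {A B C s : ℤ × ℤ} (hA : ι A ∈ K) (hB : ι B ∈ K) (hC : ι C ∈ K)
    (hD : cross (B - A) (C - A) = 1) (hs : ι s ∈ K) :
    s = A ∨ s = B ∨ s = C ∨ (Odd (cross (s - A) (C - A)) ∧ Odd (cross (B - A) (s - A))) := by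
  have hs' := eq_cross_smul_add_cross_smul hD (s - A)
  rcases Int.even_or_odd (cross (s - A) (C - A)) with ⟨k, hk⟩ | ⟨k, hk⟩ <;>
    rcases Int.even_or_odd (cross (B - A) (s - A)) with ⟨l, hl⟩ | ⟨l, hl⟩
  · exact .inl (eq_of_not_hasCongrModTwoPair hpair hA hs (w := k • (B - A) + l • (C - A))
      (by linear_combination (norm := module) hs' + hk • (B - A) + hl • (C - A)))
  · exact .inr (.inr (.inl (eq_of_not_hasCongrModTwoPair hpair hC hs
      (w := k • (B - A) + l • (C - A))
      (by linear_combination (norm := module) hs' + hk • (B - A) + hl • (C - A)))))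
  · exact .inr (.inl (eq_of_not_hasCongrModTwoPair hpair hB hs
      (w := k • (B - A) + l • (C - A))
      (by linear_combination (norm := module) hs' + hk • (B - A) + hl • (C - A))))
  · exact .inr (.inr (.inr ⟨⟨k, hk⟩, ⟨l, hl⟩⟩))

theorem eq_of_odd_of_not_hasCongrModTwoPair {K : Set (ℝ × ℝ)} (hpair : ¬HasCongrModTwoPair K)
    {A B C s t : ℤ × ℤ} (hD : cross (B - A) (C - A) = 1) (hs : ι s ∈ K) (ht : ι t ∈ K)
    (hσs : Odd (cross (s - A) (C - A))) (hτs : Odd (cross (B - A) (s - A)))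
    (hσt : Odd (cross (t - A) (C - A))) (hτt : Odd (cross (B - A) (t - A))) : t = s := by
  obtain ⟨k, hk⟩ := hσs
  obtain ⟨l, hl⟩ := hτs
  obtain ⟨k', hk'⟩ := hσt
  obtain ⟨l', hl'⟩ := hτt
  exact eq_of_not_hasCongrModTwoPair hpair hs ht (w := (k' - k) • (B - A) + (l' - l) • (C - A))
    (by linear_combination (norm := module) eq_cross_smul_add_cross_smul hD (t - A) -
      eq_cross_smul_add_cross_smul hD (s - A) + (hk' - hk) • (B - A) + (hl' - hl) • (C - A))

theorem exists_cross_bounds_of_not_hasCongrModTwoPair {K : Set (ℝ × ℝ)} (hK : Convex ℝ K)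
    (hno : ∀ q, ι q ∉ interior K) (hpair : ¬HasCongrModTwoPair K) {A B C : ℤ × ℤ}
    (hA : ι A ∈ K) (hB : ι B ∈ K) (hC : ι C ∈ K) (hD : cross (B - A) (C - A) ≠ 0) :
    ∃ u : ℤ × ℤ, u ≠ 0 ∧ ∃ c : ℤ, ∀ s, ι s ∈ K → c ≤ cross u s ∧ cross u s ≤ c + 1 := by
  wlog hD₁ : cross (B - A) (C - A) = 1 generalizing B C
  · have h := abs_le.1 (abs_cross_le_one hK hno hpair hA hB hC)
    exact this hC hB (by rw [cross_anticomm]; omega) (by rw [cross_anticomm]; omega)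
  have hodd : ∀ s, ι s ∈ K → Odd (cross (s - A) (C - A)) → Odd (cross (B - A) (s - A)) →
      cross (s - A) (C - A) = 1 ∨ cross (B - A) (s - A) = 1 := by
    rintro s hs ⟨k, hk⟩ ⟨l, hl⟩
    have h₁ := abs_le.1 (abs_cross_le_one hK hno hpair hA hB hs)
    have h₂ := abs_le.1 (abs_cross_le_one hK hno hpair hA hs hC)
    have h₃ := abs_le.1 (abs_cross_le_one hK hno hpair hB hC hs)
    have e : cross (C - B) (s - B) = cross (B - A) (C - A) - cross (s - A) (C - A) -
        cross (B - A) (s - A) := by simp [cross]; ring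
    omega
  by_cases h : ∀ s, ι s ∈ K → Odd (cross (s - A) (C - A)) → Odd (cross (B - A) (s - A)) →
      cross (B - A) (s - A) = 1
  · refine ⟨B - A, fun h0 => by simp [h0, cross] at hD₁, cross (B - A) A, fun s hs => ?_⟩
    have hτ : 0 ≤ cross (B - A) (s - A) ∧ cross (B - A) (s - A) ≤ 1 := by
      rcases eq_or_odd_of_not_hasCongrModTwoPair hpair hA hB hC hD₁ hs
        with rfl | rfl | rfl | ⟨h₁, h₂⟩
      · simp [cross]
      · simp
      · omega
      · have := h s hs h₁ h₂; omega
    rw [cross_sub_right] at hτ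
    omega
  · push Not at h
    obtain ⟨s₀, hs₀, h₁, h₂, hτ₀⟩ := h
    have hσ₀ := (hodd s₀ hs₀ h₁ h₂).resolve_right hτ₀
    refine ⟨A - C, fun h0 => by simp [sub_eq_zero.1 h0, cross] at hD₁, cross (A - C) A,
      fun s hs => ?_⟩
    have e : cross (A - C) s = cross (A - C) A + cross (s - A) (C - A) := by simp [cross]; ring
    have hσ : 0 ≤ cross (s - A) (C - A) ∧ cross (s - A) (C - A) ≤ 1 := by
      rcases eq_or_odd_of_not_hasCongrModTwoPair hpair hA hB hC hD₁ hs
        with rfl | rfl | rfl | ⟨h₁', h₂'⟩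
      · simp [cross]
      · omega
      · simp
      · rw [eq_of_odd_of_not_hasCongrModTwoPair hpair hD₁ hs₀ hs h₁ h₂ h₁' h₂']; omega
    omega

theorem isTwicePrimitiveTriangle_of_mem {K : Set (ℝ × ℝ)} (hK : Convex ℝ K)
    (hno : ∀ q, ι q ∉ interior K) {p a b : ℤ × ℤ} (hab : cross a b = 1) (hp : ι p ∈ K)
    (ha : ι (p + 2 • a) ∈ K) (hb : ι (p + 2 • b) ∈ K) : IsTwicePrimitiveTriangle K := by
  have hD : cross (p + 2 • a - p) (p + 2 • b - p) = 4 := by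
    simp [cross] at hab ⊢
    linear_combination 4 * hab
  refine ⟨p, a, b, by rw [hab]; rfl, subset_antisymm ?_ ?_⟩
  · exact subset_convexHull_of_notMem_interior hK hp ha hb
      (by rw [cross_ι_sub_ι, hD]; norm_num)
      (ι_mem_openSegment (m := p + a) (by module))
      (ι_mem_openSegment (m := p + a + b) (by module))
      (ι_mem_openSegment (m := p + b) (by module)) (hno _) (hno _) (hno _)
  · exact convexHull_min (insert_subset_iff.2 ⟨hp, insert_subset_iff.2 ⟨ha,
      singleton_subset_iff.2 hb⟩⟩) hK

theorem hasLatticeWidthOne_or_isTwicePrimitiveTriangle_of_cross_nonneg {S : Finset (ℤ × ℤ)}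
    {Δ : Set (ℝ × ℝ)} (hΔ : Δ = convexHull ℝ (ι '' S)) (hno : ∀ q, ι q ∉ interior Δ)
    {p d e : ℤ × ℤ} {g : ℤ} (hg : 0 < g) (hde : cross d e = 1) (hp : ι p ∈ Δ)
    (hq : ι (p + (2 * g) • d) ∈ Δ) (hS : ∀ s ∈ S, 0 ≤ cross d (s - p)) :
    HasLatticeWidthOne Δ ∨ IsTwicePrimitiveTriangle Δ := by
  have hK : Convex ℝ Δ := hΔ ▸ convex_convexHull ℝ _
  obtain ⟨s₀, hs₀, hmax⟩ := S.exists_max_image (fun s => cross d (s - p))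
    (S.eq_empty_or_nonempty.resolve_left (by rintro rfl; simp [hΔ] at hp))
  by_cases hT : cross d (s₀ - p) ≤ 1
  · refine .inl (hΔ ▸ hasLatticeWidthOne_of_cross_bounds (u := d) (c := cross d p)
      (by rintro rfl; simp [cross] at hde) fun s hs => ?_)
    have := cross_sub_right d s p
    constructor <;> linarith [hmax s hs, hS s hs]
  set T := cross d (s₀ - p)
  set σ := cross (s₀ - p) e
  have hr := Int.emod_def σ T
  have hr₀ := Int.emod_nonneg σ (by omega : T ≠ 0)
  have hrT := Int.emod_lt_of_pos σ (by omega : 0 < T)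
  -- the lattice point at height one just past the edge `[p, s₀]`
  set z := p + (σ / T + 1) • d + e
  have hA : cross (s₀ - (p + (2 * g) • d)) (z - (p + (2 * g) • d)) =
      2 * g * (T - 1) - T + σ % T := by
    simp [z, T, σ, cross] at hde hr ⊢
    linear_combination (-2 * g) * hde - hr
  have hB : cross (p - s₀) (z - s₀) = T - σ % T := by
    simp [z, T, σ, cross] at hr ⊢
    linear_combination hr
  have hC : cross (p + (2 * g) • d - p) (z - p) = 2 * g := by
    simp [z, cross] at hde ⊢
    linear_combination 2 * g * hde
  by_cases hz : 0 < 2 * g * (T - 1) - T + σ % T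
  · exact (hno z (ι_mem_interior_of_cross_pos hK hp hq (hΔ ▸ ι_mem_convexHull_image hs₀)
      (hA ▸ hz) (by omega) (by omega))).elim
  obtain ⟨rfl, hT₂, hr0⟩ : g = 1 ∧ T = 2 ∧ σ % T = 0 := by
    have := mul_nonneg (by omega : (0 : ℤ) ≤ g - 1) (by omega : (0 : ℤ) ≤ T - 2)
    refine ⟨by nlinarith, by nlinarith, by nlinarith⟩
  rw [hT₂] at hr hr0
  have hσ : σ = 2 * (σ / 2) := by omega
  refine .inr (isTwicePrimitiveTriangle_of_mem hK hno (a := d) (b := (σ / 2) • d + e)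
    (by simp [cross] at hde ⊢; linear_combination hde) hp (by simpa using hq) ?_)
  convert hΔ ▸ ι_mem_convexHull_image hs₀ using 2
  linear_combination (norm := module) -(eq_cross_smul_add_cross_smul hde (s₀ - p)) -
    hσ • d - hT₂ • e

theorem hasLatticeWidthOne_or_isTwicePrimitiveTriangle_of_hasCongrModTwoPair
    {S : Finset (ℤ × ℤ)} {Δ : Set (ℝ × ℝ)} (hΔ : Δ = convexHull ℝ (ι '' S))
    (hno : ∀ q, ι q ∉ interior Δ) (hpair : HasCongrModTwoPair Δ) :
    HasLatticeWidthOne Δ ∨ IsTwicePrimitiveTriangle Δ := by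
  obtain ⟨p, w, hw, hp, hq⟩ := hpair
  have hK : Convex ℝ Δ := hΔ ▸ convex_convexHull ℝ _
  -- the midpoint `p + w` is not interior, so `S` does not meet both sides of the chord
  have hside : (∀ s ∈ S, 0 ≤ cross w (s - p)) ∨ ∀ s ∈ S, cross w (s - p) ≤ 0 := by
    by_contra! h
    obtain ⟨⟨s, hs, hs'⟩, ⟨t, ht, ht'⟩⟩ := h
    have e (r : ℤ × ℤ) : cross (p + 2 • w - p) (r - p) = 2 * cross w (r - p) := by
      simp [cross]; ring
    refine hno (p + w) (mem_interior_of_mem_openSegment hK hp hq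
      (hΔ ▸ ι_mem_convexHull_image ht) (hΔ ▸ ι_mem_convexHull_image hs)
      (ι_mem_openSegment (by module)) ?_ ?_) <;> rw [cross_ι_sub_ι, e] <;> norm_cast <;> omega
  obtain ⟨g, d, e, hg, rfl, hde⟩ := exists_eq_smul_cross_eq_one hw
  simp only [cross_smul_left] at hside
  rcases hside with h | h
  · exact hasLatticeWidthOne_or_isTwicePrimitiveTriangle_of_cross_nonneg hΔ hno hg hde hp
      (by rwa [mul_smul]) fun s hs => (mul_nonneg_iff_of_pos_left hg).1 (h s hs)
  · refine hasLatticeWidthOne_or_isTwicePrimitiveTriangle_of_cross_nonneg hΔ hno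
      (p := p + 2 • g • d) (d := -d) (e := -e) hg (by simpa [cross] using hde) hq
      (by convert hp using 2; module) fun s hs => ?_
    have : cross (-d) (s - (p + 2 • g • d)) = -cross d (s - p) := by simp [cross]; ring
    rw [this]
    nlinarith [h s hs]

end LatticePolygon

open LatticePolygon

/-- A convex lattice polygon `Δ` (with nonempty interior) has no interior lattice points if
and only if it has lattice width one or it is twice a primitive triangle. -/
theorem no_interior_lattice_points_iff (S : Finset (ℤ × ℤ)) (Δ : Set (ℝ × ℝ))
    (hΔ : Δ = convexHull ℝ ((fun p : ℤ × ℤ => ((p.1 : ℝ), (p.2 : ℝ))) '' ↑S))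
    (hint : (interior Δ).Nonempty) :
    (∀ p : ℤ × ℤ, ((p.1 : ℝ), (p.2 : ℝ)) ∉ interior Δ) ↔
      ((∃ n : ℤ × ℤ, n ≠ 0 ∧ ∃ c : ℤ, ∀ x ∈ Δ,
          (c : ℝ) ≤ (n.1 : ℝ) * x.1 + (n.2 : ℝ) * x.2 ∧
          (n.1 : ℝ) * x.1 + (n.2 : ℝ) * x.2 ≤ (c : ℝ) + 1) ∨
        (∃ v a b : ℤ × ℤ, |a.1 * b.2 - a.2 * b.1| = 1 ∧
          Δ = convexHull ℝ
            {((v.1 : ℝ), (v.2 : ℝ)),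
             (((v.1 + 2 * a.1 : ℤ) : ℝ), ((v.2 + 2 * a.2 : ℤ) : ℝ)),
             (((v.1 + 2 * b.1 : ℤ) : ℝ), ((v.2 + 2 * b.2 : ℤ) : ℝ))})) := by
  show (∀ p, ι p ∉ interior Δ) ↔ HasLatticeWidthOne Δ ∨ IsTwicePrimitiveTriangle Δ
  replace hΔ : Δ = convexHull ℝ (ι '' S) := hΔ
  refine ⟨fun hno => ?_, fun h p => h.elim (·.ι_notMem_interior p) (·.ι_notMem_interior p)⟩
  by_cases hpair : HasCongrModTwoPair Δ
  · exact hasLatticeWidthOne_or_isTwicePrimitiveTriangle_of_hasCongrModTwoPair hΔ hno hpair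
  subst hΔ
  obtain ⟨A, hA, B, hB, C, hC, hD⟩ := exists_cross_ne_zero hint
  obtain ⟨u, hu, c, hc⟩ := exists_cross_bounds_of_not_hasCongrModTwoPair
    (convex_convexHull ℝ _) hno hpair (ι_mem_convexHull_image hA) (ι_mem_convexHull_image hB)
    (ι_mem_convexHull_image hC) hD
  exact .inl (hasLatticeWidthOne_of_cross_bounds hu fun s hs => hc s (ι_mem_convexHull_image hs))
end

section
/- Let S ⊂ ℤ² be a finite set and let Δ := convexHull_ℝ(S) ⊂ ℝ² be the corresponding convex lattice polygon, with nonempty interior. Let M_0 be the affine sublattice of ℤ² generated by the lattice points on the boundary of Δ, i.e. the affine span over ℤ of { p ∈ ℤ² : p ∈ ∂Δ }, where ∂Δ denotes the frontier of Δ in ℝ². Then for every affine sublattice M of ℤ² with M_0 ⊊ M ⊆ ℤ², the number of points of M lying in the interior Δ° of Δ is strictly greater than the number of points of M_0 lying in Δ°: |Δ° ∩ M| > |Δ° ∩ M_0| ≥ 0. -/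
/-!
Three boundary lattice points of `Δ` span a nondegenerate triangle: a nonzero linear form attains
its maximum and minimum over `Δ` at vertices, which lie on the boundary, and the two values differ
because `Δ` has interior points. These points lie in `M₀ ⊆ M`.

The lattice points of `M` in `Δ` then generate `M`. Among their nondegenerate triangles take one,
`a b c`, of least area. Reducing `w ∈ M` modulo the lattice spanned by `b - a` and `c - a` gives a
point of the parallelogram on `a, b, c`; that point or its reflection in the midpoint of `b c` lies
in the triangle, hence in `Δ`, and would form a smaller nondegenerate triangle with two of the
vertices unless it is `a`. So `w` is an integral affine combination of `a, b, c`.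

Since `M₀ ⊊ M`, some lattice point of `M` in `Δ` is therefore not in `M₀`; it cannot lie on the
boundary, so it is an interior point of `Δ` counted for `M` but not for `M₀`.
-/

theorem ContinuousLinearMap.eq_zero_of_isExtrOn_of_mem_interior {E : Type*}
    [NormedAddCommGroup E] [NormedSpace ℝ E] {ℓ : E →L[ℝ] ℝ} {s : Set E} {x : E}
    (h : IsExtrOn ℓ s x) (hx : x ∈ interior s) : ℓ = 0 := by
  rw [← ℓ.fderiv (x := x)]
  exact (h.isLocalExtr (mem_interior_iff_mem_nhds.mp hx)).fderiv_eq_zero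

theorem exists_mem_frontier_convexHull_lt {E : Type*} [NormedAddCommGroup E] [NormedSpace ℝ E]
    {s : Set E} (hs : s.Finite) (hint : (interior (convexHull ℝ s)).Nonempty)
    {ℓ : E →L[ℝ] ℝ} (hℓ : ℓ ≠ 0) :
    ∃ y ∈ s, ∃ z ∈ s, y ∈ frontier (convexHull ℝ s) ∧ z ∈ frontier (convexHull ℝ s) ∧
      ℓ z < ℓ y := by
  obtain ⟨x, hx⟩ := hint
  have hne : s.Nonempty := convexHull_nonempty_iff.mp ⟨x, interior_subset hx⟩
  obtain ⟨y, hys, hy⟩ := s.exists_max_image ℓ hs hne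
  obtain ⟨z, hzs, hz⟩ := s.exists_min_image ℓ hs hne
  have hmax : IsMaxOn ℓ (convexHull ℝ s) y :=
    convexHull_min hy (convex_halfSpace_le ℓ.isLinear _)
  have hmin : IsMinOn ℓ (convexHull ℝ s) z :=
    convexHull_min hz (convex_halfSpace_ge ℓ.isLinear _)
  have hfrontier : ∀ w ∈ s, IsExtrOn ℓ (convexHull ℝ s) w → w ∈ frontier (convexHull ℝ s) :=
    fun w hw hext => ⟨subset_closure (subset_convexHull ℝ s hw),
      fun hwint => hℓ (ℓ.eq_zero_of_isExtrOn_of_mem_interior hext hwint)⟩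
  refine ⟨y, hys, z, hzs, hfrontier y hys hmax.isExtr, hfrontier z hzs hmin.isExtr, ?_⟩
  by_contra! hyz
  have hxmax : IsMaxOn ℓ (convexHull ℝ s) x := fun w hw =>
    (hmax hw).trans (hyz.trans (hmin (interior_subset hx)))
  exact hℓ (ℓ.eq_zero_of_isExtrOn_of_mem_interior hxmax.isExtr hx)

def castPair : ℤ × ℤ →+ ℝ × ℝ := (Int.castAddHom ℝ).prodMap (Int.castAddHom ℝ)

@[simp]
theorem castPair_apply (p : ℤ × ℤ) : castPair p = ((p.1 : ℝ), (p.2 : ℝ)) := rfl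

def latticePoints (M : AffineSubspace ℤ (ℤ × ℤ)) (K : Set (ℝ × ℝ)) : Set (ℤ × ℤ) :=
  {p | p ∈ M ∧ castPair p ∈ K}

theorem finite_latticePoints (M : AffineSubspace ℤ (ℤ × ℤ)) {K : Set (ℝ × ℝ)}
    (hK : IsCompact K) : (latticePoints M K).Finite :=
  have hemb : Topology.IsClosedEmbedding castPair :=
    Int.isClosedEmbedding_coe_real.prodMap Int.isClosedEmbedding_coe_real
  (hemb.isCompact_preimage hK).finite_of_discrete.subset fun _ hp => hp.2

def det2 (u v : ℤ × ℤ) : ℤ := u.1 * v.2 - u.2 * v.1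

theorem det2_swap (u v : ℤ × ℤ) : det2 v u = -det2 u v := by
  unfold det2; ring

theorem det2_sub_left (u v w : ℤ × ℤ) : det2 (u - v) w = det2 u w - det2 v w := by
  simp only [det2, Prod.fst_sub, Prod.snd_sub]; ring

theorem det2_smul_eq_add (u v x : ℤ × ℤ) : det2 u v • x = det2 x v • u + det2 u x • v := by
  ext <;> simp only [det2, Prod.smul_fst, Prod.smul_snd, Prod.fst_add, Prod.snd_add,
    smul_eq_mul] <;> ring

theorem det2_eq_of_smul_eq_add {u v x : ℤ × ℤ} {p r : ℤ} (hD : det2 u v ≠ 0)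
    (h : det2 u v • x = p • u + r • v) : det2 x v = p ∧ det2 u x = r := by
  have h1 := congrArg Prod.fst h
  have h2 := congrArg Prod.snd h
  simp only [Prod.smul_fst, Prod.smul_snd, Prod.fst_add, Prod.snd_add, smul_eq_mul] at h1 h2
  unfold det2 at *
  exact ⟨mul_left_cancel₀ hD (by linear_combination v.2 * h1 - v.1 * h2),
    mul_left_cancel₀ hD (by linear_combination u.1 * h2 - u.2 * h1)⟩

theorem exists_mem_frontier_det2_ne_zero {S : Finset (ℤ × ℤ)}
    (hint : (interior (convexHull ℝ (castPair '' S))).Nonempty) {d : ℤ × ℤ} (hd : d ≠ 0) :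
    ∃ y z : ℤ × ℤ, castPair y ∈ frontier (convexHull ℝ (castPair '' S)) ∧
      castPair z ∈ frontier (convexHull ℝ (castPair '' S)) ∧ det2 (y - z) d ≠ 0 := by
  set ℓ : ℝ × ℝ →L[ℝ] ℝ :=
    (d.2 : ℝ) • ContinuousLinearMap.fst ℝ ℝ ℝ - (d.1 : ℝ) • ContinuousLinearMap.snd ℝ ℝ ℝ
  have hℓ : ∀ p, ℓ (castPair p) = det2 p d := fun p => by
    simp only [ℓ, castPair_apply, sub_apply, smul_apply, ContinuousLinearMap.coe_fst',
      ContinuousLinearMap.coe_snd', smul_eq_mul, det2, Int.cast_sub, Int.cast_mul]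
    ring
  have hℓ0 : ℓ ≠ 0 := by
    intro h
    exact hd (Prod.ext (by simpa [h, det2, eq_comm] using hℓ (0, 1))
      (by simpa [h, det2, eq_comm] using hℓ (1, 0)))
  obtain ⟨_, ⟨y, -, rfl⟩, _, ⟨z, -, rfl⟩, hy, hz, hlt⟩ :=
    exists_mem_frontier_convexHull_lt (S.finite_toSet.image castPair) hint hℓ0
  refine ⟨y, z, hy, hz, ?_⟩
  rw [hℓ, hℓ] at hlt
  rw [det2_sub_left]
  exact sub_ne_zero.mpr (by exact_mod_cast hlt.ne')

theorem exists_mem_frontier_triple {S : Finset (ℤ × ℤ)}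
    (hint : (interior (convexHull ℝ (castPair '' S))).Nonempty) :
    ∃ a b c : ℤ × ℤ, castPair a ∈ frontier (convexHull ℝ (castPair '' S)) ∧
      castPair b ∈ frontier (convexHull ℝ (castPair '' S)) ∧
      castPair c ∈ frontier (convexHull ℝ (castPair '' S)) ∧ det2 (b - a) (c - a) ≠ 0 := by
  obtain ⟨y, z, hy, hz, hyz⟩ := exists_mem_frontier_det2_ne_zero hint (d := (1, 0)) (by simp)
  have hyz' : y - z ≠ 0 := fun h => hyz (by simp [h, det2])
  obtain ⟨u, v, hu, hv, huv⟩ := exists_mem_frontier_det2_ne_zero hint hyz'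
  rw [show u - v = (u - z) - (v - z) by abel, det2_sub_left] at huv
  by_cases hu0 : det2 (u - z) (y - z) = 0
  · exact ⟨z, y, v, hz, hy, hv, by rw [det2_swap, neg_ne_zero]; simpa [hu0] using huv⟩
  · exact ⟨z, y, u, hz, hy, hu, by rw [det2_swap, neg_ne_zero]; exact hu0⟩

theorem castPair_mem_of_smul_eq_add {K : Set (ℝ × ℝ)} (hK : Convex ℝ K) {a b c z : ℤ × ℤ}
    (ha : castPair a ∈ K) (hb : castPair b ∈ K) (hc : castPair c ∈ K) {D p r : ℤ}
    (hD : 0 < D) (hp : 0 ≤ p) (hr : 0 ≤ r) (hpr : p + r ≤ D)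
    (h : D • (z - a) = p • (b - a) + r • (c - a)) : castPair z ∈ K := by
  have hD' : (0 : ℝ) < D := by exact_mod_cast hD
  have hR : (D : ℝ) • (castPair z - castPair a) =
      (p : ℝ) • (castPair b - castPair a) + (r : ℝ) • (castPair c - castPair a) := by
    simpa only [map_zsmul, map_add, map_sub, Int.cast_smul_eq_zsmul] using congrArg castPair h
  have hz : castPair z = ((D - p - r) / D : ℝ) • castPair a + (p / D : ℝ) • castPair b
      + (r / D : ℝ) • castPair c := by
    apply smul_right_injective (ℝ × ℝ) hD'.ne'
    simp only [smul_add, smul_smul, mul_div_cancel₀ _ hD'.ne']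
    linear_combination (norm := module) hR
  have hpr' : (p : ℝ) + r ≤ D := by exact_mod_cast hpr
  have hw : ∀ i ∈ Finset.univ, 0 ≤ ![((D - p - r) / D : ℝ), p / D, r / D] i := by
    intro i _
    fin_cases i
    exacts [div_nonneg (by linarith) hD'.le, div_nonneg (by exact_mod_cast hp) hD'.le,
      div_nonneg (by exact_mod_cast hr) hD'.le]
  have := hK.sum_mem hw (by
      simp only [Fin.sum_univ_three, Matrix.cons_val_zero, Matrix.cons_val_one, Matrix.cons_val]
      field_simp; ring)
    (z := ![castPair a, castPair b, castPair c]) (by intro i _; fin_cases i <;> assumption)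
  simpa [Fin.sum_univ_three, hz] using this

theorem exists_det2_pos_minimal {T : Set (ℤ × ℤ)}
    (h : ∃ a ∈ T, ∃ b ∈ T, ∃ c ∈ T, det2 (b - a) (c - a) ≠ 0) :
    ∃ a ∈ T, ∃ b ∈ T, ∃ c ∈ T, 0 < det2 (b - a) (c - a) ∧
      ∀ u ∈ T, ∀ v ∈ T, ∀ t ∈ T, 0 < det2 (v - u) (t - u) →
        det2 (b - a) (c - a) ≤ det2 (v - u) (t - u) := by
  classical
  have hex : ∃ n : ℕ, ∃ a ∈ T, ∃ b ∈ T, ∃ c ∈ T,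
      0 < det2 (b - a) (c - a) ∧ det2 (b - a) (c - a) = n := by
    obtain ⟨a, ha, b, hb, c, hc, hne⟩ := h
    rcases hne.lt_or_gt with hneg | hpos
    · exact ⟨_, a, ha, c, hc, b, hb, by rw [det2_swap]; omega,
        (Int.toNat_of_nonneg (by rw [det2_swap]; omega)).symm⟩
    · exact ⟨_, a, ha, b, hb, c, hc, hpos, (Int.toNat_of_nonneg hpos.le).symm⟩
  obtain ⟨a, ha, b, hb, c, hc, hpos, hn⟩ := Nat.find_spec hex
  refine ⟨a, ha, b, hb, c, hc, hpos, fun u hu v hv t ht hpos' => ?_⟩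
  have := Nat.find_min' hex ⟨u, hu, v, hv, t, ht, hpos', (Int.toNat_of_nonneg hpos'.le).symm⟩
  omega

section MinimalTriangle

variable {M : AffineSubspace ℤ (ℤ × ℤ)} {K : Set (ℝ × ℝ)} {a b c : ℤ × ℤ}

theorem coeffs_eq_zero_of_minimal (hK : Convex ℝ K) (ha : a ∈ latticePoints M K)
    (hb : b ∈ latticePoints M K) (hc : c ∈ latticePoints M K)
    (hD : 0 < det2 (b - a) (c - a))
    (hmin : ∀ u ∈ latticePoints M K, ∀ v ∈ latticePoints M K,
      ∀ t ∈ latticePoints M K, 0 < det2 (v - u) (t - u) →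
        det2 (b - a) (c - a) ≤ det2 (v - u) (t - u))
    {z : ℤ × ℤ} (hz : z ∈ M) {p r : ℤ} (hp : 0 ≤ p) (hpD : p < det2 (b - a) (c - a))
    (hr : 0 ≤ r) (hrD : r < det2 (b - a) (c - a))
    (h : det2 (b - a) (c - a) • (z - a) = p • (b - a) + r • (c - a)) : p = 0 ∧ r = 0 := by
  set D := det2 (b - a) (c - a)
  have htriangle : ∀ z ∈ M, ∀ p r : ℤ, 0 ≤ p → 0 ≤ r → p + r ≤ D →
      D • (z - a) = p • (b - a) + r • (c - a) → (p = 0 ∨ D ≤ p) ∧ (r = 0 ∨ D ≤ r) := by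
    intro z hz p r hp hr hpr h
    have hzT : z ∈ latticePoints M K :=
      ⟨hz, castPair_mem_of_smul_eq_add hK ha.2 hb.2 hc.2 hD hp hr hpr h⟩
    obtain ⟨hdetp, hdetr⟩ := det2_eq_of_smul_eq_add hD.ne' h
    refine ⟨hp.eq_or_lt.imp Eq.symm fun hp => ?_, hr.eq_or_lt.imp Eq.symm fun hr => ?_⟩
    · exact hdetp ▸ hmin a ha z hzT c hc (hdetp ▸ hp)
    · exact hdetr ▸ hmin a ha b hb z hzT (hdetr ▸ hr)
  by_cases hpr : p + r ≤ D
  · have := htriangle z hz p r hp hr hpr h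
    omega
  · -- the reflection `b + c - z` of `z` lies in the triangle `a b c`
    have hz' : (1 : ℤ) • (b -ᵥ z) +ᵥ c ∈ M := M.smul_vsub_vadd_mem 1 hb.1 hz hc.1
    have := htriangle _ hz' (D - p) (D - r) (by omega) (by omega) (by omega) (by
      simp only [one_smul, vsub_eq_sub, vadd_eq_add]
      linear_combination (norm := module) -h)
    omega

theorem le_affineSpan_latticePoints (hK : Convex ℝ K)
    (h : ∃ a ∈ latticePoints M K, ∃ b ∈ latticePoints M K,
      ∃ c ∈ latticePoints M K, det2 (b - a) (c - a) ≠ 0) :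
    M ≤ affineSpan ℤ (latticePoints M K) := by
  obtain ⟨a, ha, b, hb, c, hc, hD, hmin⟩ := exists_det2_pos_minimal h
  intro w hw
  set D := det2 (b - a) (c - a)
  set P := det2 (w - a) (c - a)
  set Q := det2 (b - a) (w - a)
  have hcramer : D • (w - a) = P • (b - a) + Q • (c - a) := det2_smul_eq_add _ _ _
  -- reduce `w` modulo the lattice spanned by `b - a` and `c - a`
  have hzM : (-(P / D)) • (b -ᵥ a) +ᵥ ((-(Q / D)) • (c -ᵥ a) +ᵥ w) ∈ M :=
    M.smul_vsub_vadd_mem _ hb.1 ha.1 (M.smul_vsub_vadd_mem _ hc.1 ha.1 hw)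
  obtain ⟨hP, hQ⟩ := coeffs_eq_zero_of_minimal hK ha hb hc hD hmin hzM (Int.emod_nonneg P hD.ne')
    (Int.emod_lt_of_pos P hD) (Int.emod_nonneg Q hD.ne') (Int.emod_lt_of_pos Q hD) (by
      simp only [vsub_eq_sub, vadd_eq_add, Int.emod_def]
      linear_combination (norm := module) hcramer)
  have hw : D • w = D • ((P / D) • (b -ᵥ a) +ᵥ ((Q / D) • (c -ᵥ a) +ᵥ a)) := by
    rw [Int.emod_def, sub_eq_zero] at hP hQ
    simp only [vsub_eq_sub, vadd_eq_add]
    linear_combination (norm := module) hcramer + hP • (b - a) + hQ • (c - a)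
  rw [smul_right_injective (ℤ × ℤ) hD.ne' hw]
  exact AffineSubspace.smul_vsub_vadd_mem _ _ (mem_affineSpan ℤ hb) (mem_affineSpan ℤ ha)
    (AffineSubspace.smul_vsub_vadd_mem _ _ (mem_affineSpan ℤ hc) (mem_affineSpan ℤ ha)
      (mem_affineSpan ℤ ha))

end MinimalTriangle

/-- Let `Δ` be a convex lattice polygon with nonempty interior and `M₀` the affine
sublattice of `ℤ²` generated by the lattice points on the boundary of `Δ`. Then any
strictly larger affine sublattice `M₀ ⊊ M ⊆ ℤ²` has strictly more points in the interior
of `Δ`: `|Δ° ∩ M| > |Δ° ∩ M₀| ≥ 0`. -/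
theorem interior_points_strict_mono (S : Finset (ℤ × ℤ)) (Δ : Set (ℝ × ℝ))
    (hΔ : Δ = convexHull ℝ ((fun p : ℤ × ℤ => ((p.1 : ℝ), (p.2 : ℝ))) '' ↑S))
    (hint : (interior Δ).Nonempty)
    (M₀ : AffineSubspace ℤ (ℤ × ℤ))
    (hM₀ : M₀ = affineSpan ℤ {p : ℤ × ℤ | ((p.1 : ℝ), (p.2 : ℝ)) ∈ frontier Δ})
    (M : AffineSubspace ℤ (ℤ × ℤ)) (hM : M₀ < M) :
    {p : ℤ × ℤ | p ∈ M ∧ ((p.1 : ℝ), (p.2 : ℝ)) ∈ interior Δ}.ncard >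
      {p : ℤ × ℤ | p ∈ M₀ ∧ ((p.1 : ℝ), (p.2 : ℝ)) ∈ interior Δ}.ncard := by
  change (latticePoints M (interior Δ)).ncard > (latticePoints M₀ (interior Δ)).ncard
  have hΔ' : Δ = convexHull ℝ (castPair '' S) := hΔ
  have hclosed : IsClosed Δ := hΔ' ▸ (S.finite_toSet.image _).isClosed_convexHull ℝ
  have hcompact : IsCompact Δ := hΔ' ▸ (S.finite_toSet.image _).isCompact_convexHull ℝ
  have hfrontier : ∀ p, castPair p ∈ frontier Δ → p ∈ M₀ :=
    fun p hp => hM₀ ▸ subset_affineSpan ℤ _ hp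
  have hmem : ∀ p, castPair p ∈ frontier Δ → p ∈ latticePoints M Δ :=
    fun p hp => ⟨hM.le (hfrontier p hp), hclosed.frontier_subset hp⟩
  obtain ⟨a, b, c, ha, hb, hc, hdet⟩ := exists_mem_frontier_triple (hΔ' ▸ hint)
  rw [← hΔ'] at ha hb hc
  have hspan := le_affineSpan_latticePoints (hΔ' ▸ convex_convexHull ℝ _)
    ⟨a, hmem a ha, b, hmem b hb, c, hmem c hc, hdet⟩
  obtain ⟨w, ⟨hwM, hwΔ⟩, hwM₀⟩ : ∃ w ∈ latticePoints M Δ, w ∉ M₀ := by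
    by_contra! hsub
    exact hM.not_ge (hspan.trans (affineSpan_le.mpr hsub))
  have hwint : castPair w ∈ interior Δ :=
    by_contra fun h => hwM₀ (hfrontier w ⟨subset_closure hwΔ, h⟩)
  refine Set.ncard_lt_ncard ((Set.ssubset_iff_of_subset ?_).mpr ?_)
    ((finite_latticePoints M hcompact).subset fun p hp => ⟨hp.1, interior_subset hp.2⟩)
  · exact fun p hp => ⟨hM.le hp.1, hp.2⟩
  · exact ⟨w, ⟨hwM, hwint⟩, fun h => hwM₀ h.1⟩
end

section
/- Let v₀, v₁, v₂ ∈ ℤ² be three non-collinear points such that the only lattice points of the triangle T := convexHull_ℝ({v₀, v₁, v₂}) ⊂ ℝ² are its vertices, i.e. T ∩ ℤ² = {v₀, v₁, v₂}. Then |det(v₁ − v₀, v₂ − v₀)| = 1; equivalently, T has Euclidean area 1/2 and is affinely unimodularly equivalent to the standard triangle with vertices (0,0), (1,0), (0,1). -/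
/-!
Put `a = v₁ - v₀`, `b = v₂ - v₀` and `D = det(a, b)`, which is nonzero by non-collinearity.
By Cramer's rule, `det(x, b)` and `det(a, x)` are `D` times the barycentric coordinates of
`v₀ + x` at `v₁` and `v₂`. If `D ≥ 2`, then `a` and `b` do not span `ℤ²` (otherwise `D² ∣ D`);
reducing a vector outside their span modulo `a` and `b` gives a nonzero lattice point `x` of the
half-open parallelogram on `a, b`, and `v₀ + x` or `v₀ + a + b - x` is a lattice point of the
triangle other than a vertex. Applied to both orientations of the triangle this gives `|D| ≤ 1`.
-/

section PlaneDet

variable {R : Type*} [CommRing R]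

def planeDet (a b : R × R) : R := a.1 * b.2 - a.2 * b.1

theorem planeDet_comm (a b : R × R) : planeDet a b = -planeDet b a := by
  simp only [planeDet]; ring

/-- Cramer's rule. -/
theorem planeDet_smul_eq_add (a b x : R × R) :
    planeDet a b • x = planeDet x b • a + planeDet a x • b := by
  ext <;>
    simp only [planeDet, Prod.smul_fst, Prod.smul_snd, Prod.fst_add, Prod.snd_add, smul_eq_mul] <;>
    ring

theorem planeDet_ne_zero_of_linearIndependent [Nontrivial R] {a b : R × R}
    (h : LinearIndependent R ![a, b]) : planeDet a b ≠ 0 := by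
  intro hD
  rw [LinearIndependent.pair_iff] at h
  unfold planeDet at hD
  have h₁ := h b.2 (-a.2) <| Prod.ext
    (by simp only [Prod.fst_add, Prod.smul_fst, smul_eq_mul, Prod.fst_zero]; linear_combination hD)
    (by simp only [Prod.snd_add, Prod.smul_snd, smul_eq_mul, Prod.snd_zero]; ring)
  have h₂ := h (-b.1) a.1 <| Prod.ext
    (by simp only [Prod.fst_add, Prod.smul_fst, smul_eq_mul, Prod.fst_zero]; ring)
    (by simp only [Prod.snd_add, Prod.smul_snd, smul_eq_mul, Prod.snd_zero]; linear_combination hD)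
  have ha : a = 0 := Prod.ext h₂.2 (neg_eq_zero.1 h₁.2)
  exact one_ne_zero (h 1 0 (by simp [ha])).1

end PlaneDet

theorem linearIndependent_vsub_of_not_collinear {k V P : Type*} [DivisionRing k]
    [AddCommGroup V] [Module k V] [AddTorsor V P] {p₀ p₁ p₂ : P}
    (h : ¬Collinear k {p₀, p₁, p₂}) : LinearIndependent k ![p₁ -ᵥ p₀, p₂ -ᵥ p₀] := by
  rw [← affineIndependent_iff_not_collinear_set,
    affineIndependent_iff_linearIndependent_vsub k _ 0,
    ← linearIndependent_equiv (finSuccAboveEquiv (0 : Fin 3))] at h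
  have hfun : ![p₁ -ᵥ p₀, p₂ -ᵥ p₀] = (fun i : {x : Fin 3 // x ≠ 0} =>
      ![p₀, p₁, p₂] i -ᵥ ![p₀, p₁, p₂] 0) ∘ finSuccAboveEquiv 0 := by
    ext i; fin_cases i <;> rfl
  rwa [hfun]

section ConvexHull

variable {K : Type*} [Field K] [LinearOrder K] [IsStrictOrderedRing K]

theorem smul_add_smul_add_smul_mem_convexHull {E : Type*} [AddCommGroup E] [Module K E]
    {x y z : E} {a b c : K} (ha : 0 ≤ a) (hb : 0 ≤ b) (hc : 0 ≤ c) (habc : a + b + c = 1) :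
    a • x + b • y + c • z ∈ convexHull K {x, y, z} := by
  have := (convex_convexHull K {x, y, z}).sum_mem (t := Finset.univ) (w := ![a, b, c])
    (z := ![x, y, z]) (by simp [Fin.forall_fin_succ, ha, hb, hc])
    (by simp [Fin.sum_univ_three, habc])
    (fun i _ => subset_convexHull K _ (by fin_cases i <;> simp))
  simpa [Fin.sum_univ_three] using this

theorem mem_convexHull_of_planeDet {p₀ p₁ p₂ x : K × K} (hD : 0 < planeDet (p₁ - p₀) (p₂ - p₀))
    (h₁ : 0 ≤ planeDet (x - p₀) (p₂ - p₀)) (h₂ : 0 ≤ planeDet (p₁ - p₀) (x - p₀))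
    (hsum : planeDet (x - p₀) (p₂ - p₀) + planeDet (p₁ - p₀) (x - p₀) ≤
      planeDet (p₁ - p₀) (p₂ - p₀)) :
    x ∈ convexHull K {p₀, p₁, p₂} := by
  set D := planeDet (p₁ - p₀) (p₂ - p₀)
  set l₁ := planeDet (x - p₀) (p₂ - p₀)
  set l₂ := planeDet (p₁ - p₀) (x - p₀)
  have hx : x = ((D - l₁ - l₂) / D) • p₀ + (l₁ / D) • p₁ + (l₂ / D) • p₂ := by
    rw [div_eq_inv_mul, div_eq_inv_mul, div_eq_inv_mul, mul_smul, mul_smul, mul_smul,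
      ← smul_add, ← smul_add, eq_inv_smul_iff₀ hD.ne']
    linear_combination (norm := module) planeDet_smul_eq_add (p₁ - p₀) (p₂ - p₀) (x - p₀)
  rw [hx]
  refine smul_add_smul_add_smul_mem_convexHull ?_ (div_nonneg h₁ hD.le) (div_nonneg h₂ hD.le) ?_
  · exact div_nonneg (by linarith) hD.le
  · field_simp; ring

end ConvexHull

def castPoint (p : ℤ × ℤ) : ℝ × ℝ := (p.1, p.2)

theorem castPoint_sub (p q : ℤ × ℤ) : castPoint (p - q) = castPoint p - castPoint q := by
  simp [castPoint]

theorem cast_planeDet (a b : ℤ × ℤ) :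
    ((planeDet a b : ℤ) : ℝ) = planeDet (castPoint a) (castPoint b) := by
  simp [planeDet, castPoint]

theorem exists_not_dvd_planeDet {a b : ℤ × ℤ} (h : 2 ≤ planeDet a b) :
    ∃ x, ¬(planeDet a b ∣ planeDet x b ∧ planeDet a b ∣ planeDet a x) := by
  by_contra! hdvd
  obtain ⟨hb₂, ha₂⟩ := hdvd (1, 0)
  obtain ⟨hb₁, ha₁⟩ := hdvd (0, 1)
  simp only [planeDet, one_mul, zero_mul, mul_zero, mul_one, sub_zero, zero_sub, dvd_neg]
    at hb₂ ha₂ hb₁ ha₁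
  have hsq : planeDet a b * planeDet a b ∣ planeDet a b := by
    conv_rhs => unfold planeDet
    exact dvd_sub (mul_dvd_mul ha₁ hb₂) (mul_dvd_mul ha₂ hb₁)
  nlinarith [Int.le_of_dvd (by omega) hsq]

theorem exists_nonzero_mem_parallelogram {a b : ℤ × ℤ} (h : 2 ≤ planeDet a b) :
    ∃ y, 0 ≤ planeDet y b ∧ planeDet y b < planeDet a b ∧
      0 ≤ planeDet a y ∧ planeDet a y < planeDet a b ∧ 0 < planeDet y b + planeDet a y := by
  obtain ⟨x, hx⟩ := exists_not_dvd_planeDet h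
  set D := planeDet a b
  have hD₀ : 0 < D := by omega
  set y := x - (planeDet x b / D) • a - (planeDet a x / D) • b
  have h₁ : planeDet y b = planeDet x b % D := by
    rw [Int.emod_def]
    simp only [y, D, planeDet, Prod.fst_sub, Prod.snd_sub, Prod.smul_fst, Prod.smul_snd, smul_eq_mul]
    ring
  have h₂ : planeDet a y = planeDet a x % D := by
    rw [Int.emod_def]
    simp only [y, D, planeDet, Prod.fst_sub, Prod.snd_sub, Prod.smul_fst, Prod.smul_snd, smul_eq_mul]
    ring
  rw [Int.dvd_iff_emod_eq_zero, Int.dvd_iff_emod_eq_zero] at hx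
  refine ⟨y, ?_⟩
  have := Int.emod_nonneg (planeDet x b) hD₀.ne'
  have := Int.emod_nonneg (planeDet a x) hD₀.ne'
  have := Int.emod_lt_of_pos (planeDet x b) hD₀
  have := Int.emod_lt_of_pos (planeDet a x) hD₀
  omega

theorem exists_nonvertex_mem_triangle {a b : ℤ × ℤ} (h : 2 ≤ planeDet a b) :
    ∃ x, 0 ≤ planeDet x b ∧ 0 ≤ planeDet a x ∧ planeDet x b + planeDet a x ≤ planeDet a b ∧
      planeDet x b < planeDet a b ∧ planeDet a x < planeDet a b ∧
      0 < planeDet x b + planeDet a x := by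
  obtain ⟨y, hy⟩ := exists_nonzero_mem_parallelogram h
  by_cases hsum : planeDet y b + planeDet a y ≤ planeDet a b
  · exact ⟨y, by omega⟩
  · refine ⟨a + b - y, ?_⟩
    have h₁ : planeDet (a + b - y) b = planeDet a b - planeDet y b := by
      simp only [planeDet, Prod.fst_sub, Prod.snd_sub, Prod.fst_add, Prod.snd_add]; ring
    have h₂ : planeDet a (a + b - y) = planeDet a b - planeDet a y := by
      simp only [planeDet, Prod.fst_sub, Prod.snd_sub, Prod.fst_add, Prod.snd_add]; ring
    omega

theorem planeDet_le_one_of_primitive {v₀ v₁ v₂ : ℤ × ℤ}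
    (hT : ∀ p, castPoint p ∈ convexHull ℝ {castPoint v₀, castPoint v₁, castPoint v₂} →
      p = v₀ ∨ p = v₁ ∨ p = v₂) :
    planeDet (v₁ - v₀) (v₂ - v₀) ≤ 1 := by
  by_contra! h
  obtain ⟨x, h₁, h₂, hsum, hlt₁, hlt₂, hpos⟩ :=
    exists_nonvertex_mem_triangle (Int.add_one_le_iff.2 h)
  have hD : 0 < planeDet (v₁ - v₀) (v₂ - v₀) := by omega
  have hmem : castPoint (v₀ + x) ∈ convexHull ℝ {castPoint v₀, castPoint v₁, castPoint v₂} := by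
    refine mem_convexHull_of_planeDet ?_ ?_ ?_ ?_ <;>
      simp only [← castPoint_sub, ← cast_planeDet, add_sub_cancel_left] <;> exact_mod_cast ‹_›
  rcases hT _ hmem with hx | hx | hx
  · rw [add_eq_left] at hx
    subst hx
    simp [planeDet] at hpos
  · rw [← eq_sub_iff_add_eq'] at hx
    subst hx
    omega
  · rw [← eq_sub_iff_add_eq'] at hx
    subst hx
    omega

/-- A primitive lattice triangle (one whose only lattice points are its three non-collinear
vertices) has `|det(v₁ − v₀, v₂ − v₀)| = 1`, i.e. it is affinely unimodularly equivalent to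
the standard triangle. -/
theorem primitive_triangle_det (v₀ v₁ v₂ : ℤ × ℤ)
    (hnc : ¬ Collinear ℝ ({((v₀.1 : ℝ), (v₀.2 : ℝ)), ((v₁.1 : ℝ), (v₁.2 : ℝ)),
      ((v₂.1 : ℝ), (v₂.2 : ℝ))} : Set (ℝ × ℝ)))
    (hT : ∀ p : ℤ × ℤ,
      ((p.1 : ℝ), (p.2 : ℝ)) ∈ convexHull ℝ
          ({((v₀.1 : ℝ), (v₀.2 : ℝ)), ((v₁.1 : ℝ), (v₁.2 : ℝ)),
            ((v₂.1 : ℝ), (v₂.2 : ℝ))} : Set (ℝ × ℝ)) ↔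
        p = v₀ ∨ p = v₁ ∨ p = v₂) :
    |(v₁.1 - v₀.1) * (v₂.2 - v₀.2) - (v₁.2 - v₀.2) * (v₂.1 - v₀.1)| = 1 := by
  have hne : planeDet (v₁ - v₀) (v₂ - v₀) ≠ 0 := by
    have := planeDet_ne_zero_of_linearIndependent
      (linearIndependent_vsub_of_not_collinear (p₀ := castPoint v₀) (p₁ := castPoint v₁)
        (p₂ := castPoint v₂) hnc)
    rwa [vsub_eq_sub, vsub_eq_sub, ← castPoint_sub, ← castPoint_sub, ← cast_planeDet,
      Int.cast_ne_zero] at this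
  have hle : planeDet (v₁ - v₀) (v₂ - v₀) ≤ 1 :=
    planeDet_le_one_of_primitive fun p hp => (hT p).1 hp
  have hge : planeDet (v₂ - v₀) (v₁ - v₀) ≤ 1 := planeDet_le_one_of_primitive fun p hp => by
    rw [Set.pair_comm] at hp
    have := (hT p).1 hp
    tauto
  rw [planeDet_comm] at hge
  change |planeDet (v₁ - v₀) (v₂ - v₀)| = 1
  rw [abs_eq zero_le_one]
  omega
end

section
/- Let d ≥ 1 be an integer and v₀, v₁, v₂ ∈ ℤ² non-collinear points spanning the lattice triangle Δ := convexHull_ℝ({v₀, v₁, v₂}) ⊂ ℝ². Suppose that every side of Δ has integral length d, i.e. there exist primitive vectors w₁, w₂, w₃ ∈ ℤ² with v₁ − v₀ = d·w₁, v₂ − v₁ = d·w₂ and v₀ − v₂ = d·w₃, and suppose that the affine span over ℤ of the set of lattice points on the boundary of Δ, { p ∈ ℤ² : p ∈ ∂Δ }, is all of ℤ². Then there exist U ∈ GL₂(ℤ) and t ∈ ℤ² such that the affine map x ↦ Ux + t sends {v₀, v₁, v₂} onto {(0,0), (d,0), (0,d)}; i.e. Δ is affinely unimodularly equivalent to d times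 a primitive triangle. -/
/-!
A lattice point on an edge of `Δ` differs from an endpoint of that edge by an integer multiple
of the edge's primitive direction, so all boundary lattice points lie in
`v₀ + ℤ w₁ + ℤ w₂ + ℤ w₃`. Hence `w₁, w₂, w₃` generate `ℤ²`; as `w₁ + w₂ + w₃ = 0`, the primitive
directions `w₁` and `-w₃` of the two edges at `v₀` form a basis of `ℤ²`, and the unimodular map
sending it to the standard basis and `v₀` to `0` maps `Δ` to `d` times the standard triangle.
-/

open Set Module Submodule

theorem AffineBasis.coord_nonneg_and_exists_coord_eq_zero_of_mem_frontier {ι E : Type*}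
    [Finite ι] [NormedAddCommGroup E] [NormedSpace ℝ E] (b : AffineBasis ι ℝ E) {x : E}
    (hx : x ∈ frontier (convexHull ℝ (range b))) :
    (∀ i, 0 ≤ b.coord i x) ∧ ∃ i, b.coord i x = 0 := by
  have hnonneg : ∀ i, 0 ≤ b.coord i x := by
    have := ((finite_range b).isClosed_convexHull (𝕜 := ℝ)).frontier_subset hx
    rwa [b.convexHull_eq_nonneg_coord] at this
  have hx' := hx.2
  simp only [b.interior_convexHull, mem_ofPred_eq, not_forall, not_lt] at hx'
  obtain ⟨i, hi⟩ := hx'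
  exact ⟨hnonneg, i, le_antisymm hi (hnonneg i)⟩

theorem mem_segment_of_mem_frontier_convexHull_triple {E : Type*} [NormedAddCommGroup E]
    [NormedSpace ℝ E] [FiniteDimensional ℝ E] (hE : finrank ℝ E = 2) {A B C x : E}
    (hABC : ¬ Collinear ℝ {A, B, C}) (hx : x ∈ frontier (convexHull ℝ {A, B, C})) :
    x ∈ segment ℝ A B ∨ x ∈ segment ℝ B C ∨ x ∈ segment ℝ C A := by
  have hind : AffineIndependent ℝ ![A, B, C] := affineIndependent_iff_not_collinear_set.mpr hABC
  let b : AffineBasis (Fin 3) ℝ E :=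
    ⟨![A, B, C], hind, hind.affineSpan_eq_top_iff_card_eq_finrank_add_one.mpr (by simp [hE])⟩
  have hb : ⇑b = ![A, B, C] := rfl
  have hrange : range b = {A, B, C} := by
    rw [hb, Matrix.range_cons, Matrix.range_cons_cons_empty, singleton_union]
  rw [← hrange] at hx
  obtain ⟨hnonneg, i, hi⟩ := b.coord_nonneg_and_exists_coord_eq_zero_of_mem_frontier hx
  have hsum := b.sum_coord_apply_eq_one x
  have hcomb := b.linear_combination_coord_eq_self x
  rw [Fin.sum_univ_three] at hsum hcomb
  simp only [hb, Matrix.cons_val_zero, Matrix.cons_val_one, Matrix.cons_val_two] at hcomb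
  have h₀ := hnonneg 0
  have h₁ := hnonneg 1
  have h₂ := hnonneg 2
  obtain rfl | rfl | rfl : i = 0 ∨ i = 1 ∨ i = 2 := by fin_cases i <;> simp
  · exact Or.inr <| Or.inl ⟨_, _, h₁, h₂, by simpa [hi] using hsum, by simpa [hi] using hcomb⟩
  · exact Or.inr <| Or.inr ⟨_, _, h₂, h₀, by linarith, by simpa [hi, add_comm] using hcomb⟩
  · exact Or.inl ⟨_, _, h₀, h₁, by simpa [hi] using hsum, by simpa [hi] using hcomb⟩

def latticeToReal : ℤ × ℤ →+ ℝ × ℝ := (Int.castAddHom ℝ).prodMap (Int.castAddHom ℝ)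

theorem latticeToReal_apply (p : ℤ × ℤ) : latticeToReal p = ((p.1 : ℝ), (p.2 : ℝ)) := rfl

theorem exists_eq_zsmul_of_latticeToReal_eq_smul {w x : ℤ × ℤ} (hw : Int.gcd w.1 w.2 = 1)
    {s : ℝ} (h : latticeToReal x = s • latticeToReal w) : ∃ m : ℤ, x = m • w := by
  obtain ⟨u, v, huv⟩ := Int.isCoprime_iff_gcd_eq_one.mpr hw
  have hcross : x.1 * w.2 = x.2 * w.1 := by
    simp only [latticeToReal_apply, Prod.smul_mk, smul_eq_mul, Prod.mk.injEq] at h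
    have : (x.1 * w.2 : ℝ) = x.2 * w.1 := by rw [h.1, h.2]; ring
    exact_mod_cast this
  refine ⟨u * x.1 + v * x.2, Prod.ext ?_ ?_⟩
  · simp only [Prod.smul_fst, smul_eq_mul]
    linear_combination (-x.1) * huv + v * hcross
  · simp only [Prod.smul_snd, smul_eq_mul]
    linear_combination (-x.2) * huv - u * hcross

theorem exists_sub_eq_zsmul_of_mem_segment {a b p w : ℤ × ℤ} {d : ℤ} (hw : Int.gcd w.1 w.2 = 1)
    (hab : b - a = d • w)
    (hp : latticeToReal p ∈ segment ℝ (latticeToReal a) (latticeToReal b)) :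
    ∃ m : ℤ, p - a = m • w := by
  rw [segment_eq_image'] at hp
  obtain ⟨θ, -, hθ⟩ := hp
  refine exists_eq_zsmul_of_latticeToReal_eq_smul hw (s := θ * d) ?_
  rw [map_sub, ← hθ, add_sub_cancel_left, ← map_sub, hab, map_zsmul, mul_smul,
    Int.cast_smul_eq_zsmul]

theorem span_eq_top_of_affineSpan_frontier_eq_top {d : ℤ} {v₀ v₁ v₂ w₁ w₂ w₃ : ℤ × ℤ}
    (hnc : ¬ Collinear ℝ {latticeToReal v₀, latticeToReal v₁, latticeToReal v₂})
    (hw₁ : Int.gcd w₁.1 w₁.2 = 1) (hw₂ : Int.gcd w₂.1 w₂.2 = 1) (hw₃ : Int.gcd w₃.1 w₃.2 = 1)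
    (hs₁ : v₁ - v₀ = d • w₁) (hs₂ : v₂ - v₁ = d • w₂) (hs₃ : v₀ - v₂ = d • w₃)
    (hspan : affineSpan ℤ {p | latticeToReal p ∈ frontier (convexHull ℝ
      {latticeToReal v₀, latticeToReal v₁, latticeToReal v₂})} = ⊤) :
    span ℤ {w₁, w₂, w₃} = ⊤ := by
  set L := span ℤ {w₁, w₂, w₃}
  have hL {w : ℤ × ℤ} (hw : w ∈ ({w₁, w₂, w₃} : Set (ℤ × ℤ))) (m : ℤ) : m • w ∈ L :=
    smul_mem _ m (subset_span hw)
  suffices h : affineSpan ℤ {p | latticeToReal p ∈ frontier (convexHull ℝ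
      {latticeToReal v₀, latticeToReal v₁, latticeToReal v₂})} ≤ AffineSubspace.mk' v₀ L by
    rw [hspan, top_le_iff] at h
    rw [← AffineSubspace.direction_mk' v₀ L, h, AffineSubspace.direction_top]
  refine affineSpan_le.mpr fun p hp => AffineSubspace.mem_mk'.mpr ?_
  rw [vsub_eq_sub]
  rcases mem_segment_of_mem_frontier_convexHull_triple (by simp) hnc hp with h | h | h
  · obtain ⟨m, hm⟩ := exists_sub_eq_zsmul_of_mem_segment hw₁ hs₁ h
    exact hm ▸ hL (by simp) m
  · obtain ⟨m, hm⟩ := exists_sub_eq_zsmul_of_mem_segment hw₂ hs₂ h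
    rw [← sub_add_sub_cancel p v₁ v₀, hm, hs₁]
    exact add_mem (hL (by simp) m) (hL (by simp) d)
  · obtain ⟨m, hm⟩ := exists_sub_eq_zsmul_of_mem_segment hw₃ hs₃ h
    rw [← sub_sub_sub_cancel_right p v₀ v₂, hm, hs₃]
    exact sub_mem (hL (by simp) m) (hL (by simp) d)

theorem exists_image_eq_dilated_standard (d : ℤ) {v₀ v₁ v₂ e₁ e₂ : ℤ × ℤ}
    (he : span ℤ {e₁, e₂} = ⊤) (h₁ : v₁ - v₀ = d • e₁) (h₂ : v₂ - v₀ = d • e₂) :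
    ∃ (U : (ℤ × ℤ) ≃ₗ[ℤ] (ℤ × ℤ)) (t : ℤ × ℤ),
      (fun x : ℤ × ℤ => U x + t) '' {v₀, v₁, v₂} = {(0, 0), (d, 0), (0, d)} := by
  let b := basisOfTopLeSpanOfCardEqFinrank (R := ℤ) ![e₁, e₂]
    (by rw [Matrix.range_cons_cons_empty, he]) (by simp)
  let U := b.equiv (Basis.finTwoProd ℤ) (Equiv.refl _)
  have hU₁ : U e₁ = (1, 0) := by
    simpa [U, b] using b.equiv_apply 0 (Basis.finTwoProd ℤ) (Equiv.refl _)
  have hU₂ : U e₂ = (0, 1) := by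
    simpa [U, b] using b.equiv_apply 1 (Basis.finTwoProd ℤ) (Equiv.refl _)
  refine ⟨U, -U v₀, ?_⟩
  have hv : ∀ v, U v + -U v₀ = U (v - v₀) := fun v => by rw [map_sub, sub_eq_add_neg]
  simp only [image_insert_eq, image_singleton, hv, sub_self, map_zero, h₁, h₂, map_zsmul, hU₁, hU₂,
    Prod.smul_mk, smul_eq_mul, mul_one, mul_zero, Prod.mk_zero_zero]

/-- A lattice triangle all of whose sides have integral length `d` and whose boundary
lattice points affinely span `ℤ²` is affinely unimodularly equivalent to `d` times the
standard primitive triangle, i.e. to the triangle with vertices `(0,0)`, `(d,0)`, `(0,d)`. -/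
theorem triangle_equilateral_is_dilated_standard (d : ℕ) (hd : 1 ≤ d) (v₀ v₁ v₂ : ℤ × ℤ)
    (hnc : ¬ Collinear ℝ ({((v₀.1 : ℝ), (v₀.2 : ℝ)), ((v₁.1 : ℝ), (v₁.2 : ℝ)),
      ((v₂.1 : ℝ), (v₂.2 : ℝ))} : Set (ℝ × ℝ)))
    (w₁ w₂ w₃ : ℤ × ℤ)
    (hw₁ : Int.gcd w₁.1 w₁.2 = 1) (hw₂ : Int.gcd w₂.1 w₂.2 = 1)
    (hw₃ : Int.gcd w₃.1 w₃.2 = 1)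
    (hs₁ : v₁ - v₀ = (d : ℤ) • w₁) (hs₂ : v₂ - v₁ = (d : ℤ) • w₂)
    (hs₃ : v₀ - v₂ = (d : ℤ) • w₃)
    (hspan : affineSpan ℤ {p : ℤ × ℤ |
        ((p.1 : ℝ), (p.2 : ℝ)) ∈ frontier (convexHull ℝ
          ({((v₀.1 : ℝ), (v₀.2 : ℝ)), ((v₁.1 : ℝ), (v₁.2 : ℝ)),
            ((v₂.1 : ℝ), (v₂.2 : ℝ))} : Set (ℝ × ℝ)))} = ⊤) :
    ∃ (U : (ℤ × ℤ) ≃ₗ[ℤ] (ℤ × ℤ)) (t : ℤ × ℤ),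
      (fun x : ℤ × ℤ => U x + t) '' {v₀, v₁, v₂} =
        {((0 : ℤ), (0 : ℤ)), ((d : ℤ), (0 : ℤ)), ((0 : ℤ), (d : ℤ))} := by
  have hd₀ : (d : ℤ) ≠ 0 := by omega
  have hw : w₁ + w₂ + w₃ = 0 := by
    refine smul_right_injective (ℤ × ℤ) hd₀ (show (d : ℤ) • _ = (d : ℤ) • 0 from ?_)
    rw [smul_zero, smul_add, smul_add, ← hs₁, ← hs₂, ← hs₃]
    abel
  have htop := span_eq_top_of_affineSpan_frontier_eq_top hnc hw₁ hw₂ hw₃ hs₁ hs₂ hs₃ hspan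
  refine exists_image_eq_dilated_standard d (e₂ := -w₃) (top_unique ?_) hs₁ ?_
  · rw [← htop, span_le, insert_subset_iff, insert_subset_iff, singleton_subset_iff]
    have h₁ : w₁ ∈ span ℤ {w₁, -w₃} := subset_span (by simp)
    have h₃ : -w₃ ∈ span ℤ {w₁, -w₃} := subset_span (by simp)
    refine ⟨h₁, ?_, by simpa using neg_mem h₃⟩
    rw [show w₂ = -w₁ + -w₃ by linear_combination hw]
    exact add_mem (neg_mem h₁) h₃
  · rw [smul_neg, ← hs₃, neg_sub]
end
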